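/- arXiv:2009.14181 — 5 statements merged into one kernel-verified Lean document; each statement's English description precedes it below -/
import Mathlib

section
/- Suppose there are N' ≥ 2 nodes forming a set V' ⊆ V, a single repair entity h, and Assumption 1 holds. Then there exists a repair sequence that allows entity h to permanently repair z ≤ N' of the nodes if and only if there exists a set {i_1, …, i_z} ⊆ V' such that v_0^{i_j} > (z − j)·Δ_dec^{i_j} for all j ∈ {1, …, z}. -/
open Classical ENNReal NNReal

noncomputable def health {N M : ℕ} (v0 : Fin N → ℝ) (Δinc : Fin N → Fin M → ℝ)
    (Δdec : Fin N → ℝ) (u : ℕ → Fin M → Option (Fin N)) : ℕ → Fin N → ℝ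
  | 0 => v0
  | t + 1 => fun j =>
      let v := health v0 Δinc Δdec u t j
      if v = 1 then 1
      else if v = 0 then 0
      else if hx : ∃ h, u t h = some j then min 1 (v + Δinc j hx.choose)
      else max 0 (v - Δdec j)


def permRepaired {N M : ℕ} (v0 : Fin N → ℝ) (Δinc : Fin N → Fin M → ℝ)
    (Δdec : Fin N → ℝ) (u : ℕ → Fin M → Option (Fin N)) (j : Fin N) : Prop :=
  ∃ t, health v0 Δinc Δdec u t j = 1


def Assumption1 {N M : ℕ} (Δinc : Fin N → Fin M → ℝ) (Δdec : Fin N → ℝ) : Prop :=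
  ∀ (j : Fin N) (h : Fin M),
    ((N : ℝ) - 1) * Δdec j < Δinc j h ∧ (∑ k ∈ Finset.univ.erase j, Δdec k) < Δinc j h


section
variable {N M : ℕ} (v0 : Fin N → ℝ) (Δinc : Fin N → Fin M → ℝ)
    (Δdec : Fin N → ℝ) (u : ℕ → Fin M → Option (Fin N))

lemma health_succ (t : ℕ) (j : Fin N) :
    health v0 Δinc Δdec u (t+1) j =
      (let v := health v0 Δinc Δdec u t j
      if v = 1 then 1
      else if v = 0 then 0
      else if hx : ∃ h, u t h = some j then min 1 (v + Δinc j hx.choose)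
      else max 0 (v - Δdec j)) := rfl

lemma health_one_mono {t t' : ℕ} (htt : t ≤ t') {j : Fin N}
    (h1 : health v0 Δinc Δdec u t j = 1) : health v0 Δinc Δdec u t' j = 1 := by
  induction t' , htt using Nat.le_induction with
  | base => exact h1
  | succ n hn ih => rw [health_succ]; simp [ih]

lemma health_zero_mono {t t' : ℕ} (htt : t ≤ t') {j : Fin N}
    (h0 : health v0 Δinc Δdec u t j = 0) : health v0 Δinc Δdec u t' j = 0 := by
  induction t' , htt using Nat.le_induction with
  | base => exact h0
  | succ n hn ih => rw [health_succ]; simp [ih]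

lemma perm_ne_zero {j : Fin N} (hp : permRepaired v0 Δinc Δdec u j) (t : ℕ) :
    health v0 Δinc Δdec u t j ≠ 0 := by
  obtain ⟨T, hT⟩ := hp
  intro h0
  rcases le_or_gt t T with hle | hlt
  · have := health_zero_mono v0 Δinc Δdec u hle h0
    rw [hT] at this; norm_num at this
  · have := health_one_mono v0 Δinc Δdec u hlt.le hT
    rw [this] at h0; norm_num at h0

/-- decay formula from a known value -/
lemma health_decay {j : Fin N} {x : ℝ} (hx1 : x < 1) {a : ℕ}
    (ha : health v0 Δinc Δdec u a j = x) (r : ℕ)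
    (hpos : 0 < x - r * Δdec j) (hd : 0 < Δdec j)
    (hnt : ∀ s, a ≤ s → s < a + r → ¬ ∃ h', u s h' = some j) :
    health v0 Δinc Δdec u (a + r) j = x - r * Δdec j := by
  induction r with
  | zero => simpa using ha
  | succ r ih =>
    have hposr : 0 < x - r * Δdec j := by
      push_cast at hpos ⊢; nlinarith
    have hr := ih (by push_cast at hpos ⊢; nlinarith)
      (fun s h1 h2 => hnt s h1 (by omega))
    have hlt1 : x - r * Δdec j < 1 := by
      have : (0:ℝ) ≤ r * Δdec j := by positivity
      linarith
    have hne0 : x - r * Δdec j ≠ 0 := ne_of_gt hposr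
    have hnts : ¬ ∃ h', u (a + r) h' = some j := hnt _ (by omega) (by omega)
    show health v0 Δinc Δdec u (a + r + 1) j = _
    rw [health_succ]
    simp only [hr, if_neg (ne_of_lt hlt1), if_neg hne0, dif_neg hnts]
    push_cast
    rw [max_eq_right (by push_cast at hpos; linarith)]
    ring

lemma health_untargeted_max {j : Fin N} (hv0 : 0 < v0 j) (hv1 : v0 j < 1)
    (hd : 0 < Δdec j) (t : ℕ)
    (hnt : ∀ s, s < t → ¬ ∃ h', u s h' = some j) :
    health v0 Δinc Δdec u t j = max 0 (v0 j - t * Δdec j) := by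
  induction t with
  | zero => simp [health]; linarith
  | succ t ih =>
    have iht := ih (fun s hs => hnt s (by omega))
    rw [health_succ]
    rcases le_or_gt (v0 j - t * Δdec j) 0 with hle | hgt
    · have h0 : health v0 Δinc Δdec u t j = 0 := by rw [iht, max_eq_left hle]
      rw [h0]
      have h2 : v0 j - (t+1 : ℕ) * Δdec j ≤ 0 := by push_cast; push_cast at hle; nlinarith
      rw [max_eq_left h2]
      norm_num
    · have hval : health v0 Δinc Δdec u t j = v0 j - t * Δdec j := by
        rw [iht, max_eq_right hgt.le]
      have hlt1 : v0 j - t * Δdec j < 1 := by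
        have : (0:ℝ) ≤ t * Δdec j := by positivity
        linarith
      simp only [hval, if_neg (ne_of_lt hlt1), if_neg (ne_of_gt hgt),
        dif_neg (hnt t (by omega))]
      push_cast
      congr 1
      ring

end

/-- strict mono from Fin z to ℕ grows at least linearly -/
lemma strictMono_fin_le {z : ℕ} {g : Fin z → ℕ} (hg : StrictMono g) :
    ∀ m : Fin z, (m : ℕ) ≤ g m := by
  suffices hsuff : ∀ n (hn : n < z), n ≤ g ⟨n, hn⟩ by
    intro m; simpa using hsuff m.val m.isLt
  intro n
  induction n with
  | zero => intro hn; omega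
  | succ k ih =>
    intro hn
    have h1 := ih (by omega)
    have h2 : g ⟨k, by omega⟩ < g ⟨k+1, hn⟩ := hg (by simp [Fin.lt_def])
    omega

theorem forward_dir {N M : ℕ}
    (v0 : Fin N → ℝ) (Δinc : Fin N → Fin M → ℝ) (Δdec : Fin N → ℝ)
    (hv0 : ∀ j, 0 < v0 j ∧ v0 j < 1) (hdec : ∀ j, 0 < Δdec j)
    (V' : Finset (Fin N)) (h : Fin M) (z : ℕ)
    (u : ℕ → Fin M → Option (Fin N))
    (hu1 : ∀ t h', h' ≠ h → u t h' = none)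
    (hu2 : ∀ t j, u t h = some j → j ∈ V')
    (hu3 : z ≤ Set.ncard {j | j ∈ V' ∧ permRepaired v0 Δinc Δdec u j}) :
    (∃ i : Fin z → Fin N, Function.Injective i ∧ (∀ m, i m ∈ V') ∧
        ∀ m : Fin z, ((z : ℝ) - 1 - (m : ℕ)) * Δdec (i m) < v0 (i m)) := by
  classical
  set S : Set (Fin N) := {j | j ∈ V' ∧ permRepaired v0 Δinc Δdec u j} with hS
  -- no targeting by other entities
  have honly : ∀ t j, (∃ h', u t h' = some j) ↔ u t h = some j := by
    intro t j
    constructor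
    · rintro ⟨h', hh'⟩
      by_cases he : h' = h
      · rwa [he] at hh'
      · rw [hu1 t h' he] at hh'; exact absurd hh' (by simp)
    · intro hh; exact ⟨h, hh⟩
  -- every permanently repaired node is targeted at some time
  have htar : ∀ j ∈ S, ∃ t, u t h = some j := by
    rintro j ⟨hjV, hjp⟩
    by_contra hno
    push_neg at hno
    have hnt : ∀ s, s < (Nat.ceil (v0 j / Δdec j) + 1) → ¬ ∃ h', u s h' = some j := by
      intro s _ hex
      exact (hno s) ((honly s j).mp hex)
    have := health_untargeted_max v0 Δinc Δdec u (hv0 j).1 (hv0 j).2 (hdec j) _ hnt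
    have hle : v0 j - (Nat.ceil (v0 j / Δdec j) + 1 : ℕ) * Δdec j ≤ 0 := by
      have h1 : v0 j / Δdec j ≤ Nat.ceil (v0 j / Δdec j) := Nat.le_ceil _
      have h2 : v0 j ≤ (Nat.ceil (v0 j / Δdec j) : ℝ) * Δdec j := by
        rw [div_le_iff₀ (hdec j)] at h1; linarith
      push_cast
      nlinarith [hdec j]
    rw [max_eq_left hle] at this
    exact perm_ne_zero v0 Δinc Δdec u hjp _ this
  -- first targeting time
  set τ : Fin N → ℕ := fun j => if hj : ∃ t, u t h = some j then Nat.find hj else 0 with hτ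
  have hτspec : ∀ j ∈ S, u (τ j) h = some j ∧ ∀ s < τ j, u s h ≠ some j := by
    intro j hj
    have hex := htar j hj
    simp only [hτ, dif_pos hex]
    exact ⟨Nat.find_spec hex, fun s hs => Nat.find_min hex hs⟩
  -- key bound: v0 j > τ j * Δdec j for j ∈ S
  have hkey : ∀ j ∈ S, (τ j : ℝ) * Δdec j < v0 j := by
    intro j hj
    have hnt : ∀ s, s < τ j → ¬ ∃ h', u s h' = some j := by
      intro s hs hex
      exact (hτspec j hj).2 s hs ((honly s j).mp hex)
    have hval := health_untargeted_max v0 Δinc Δdec u (hv0 j).1 (hv0 j).2 (hdec j) _ hnt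
    by_contra hle
    push_neg at hle
    rw [max_eq_left (by linarith)] at hval
    exact perm_ne_zero v0 Δinc Δdec u hj.2 _ hval
  -- pick a subset T of S of size z
  have hfin : S.Finite := Set.toFinite S
  have hcard : z ≤ S.toFinset.card := by
    rwa [Set.ncard_eq_toFinset_card'] at hu3
  obtain ⟨T, hTsub, hTcard⟩ := Finset.exists_subset_card_eq hcard
  have hTS : ∀ j ∈ T, j ∈ S := fun j hj => by
    have := hTsub hj; rwa [Set.mem_toFinset] at this
  -- τ is injective on T
  have hτinj : Set.InjOn τ T := by
    intro a ha b hb hab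
    have h1 := (hτspec a (hTS a ha)).1
    have h2 := (hτspec b (hTS b hb)).1
    rw [hab] at h1
    rw [h1] at h2
    exact Option.some_injective _ h2
  set F : Finset ℕ := T.image τ with hF
  have hFcard : F.card = z := by
    rw [hF, Finset.card_image_of_injOn hτinj, hTcard]
  set g := F.orderEmbOfFin hFcard with hg
  have hgmem : ∀ m : Fin z, g m ∈ F := fun m => F.orderEmbOfFin_mem hFcard m
  have hgle : ∀ m : Fin z, (m : ℕ) ≤ g m := strictMono_fin_le (OrderEmbedding.strictMono g)
  have hmem : ∀ m : Fin z, ∃ j, j ∈ T ∧ τ j = g ⟨z - 1 - (m : ℕ), by omega⟩ := by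
    intro m
    have hmm : g ⟨z - 1 - (m : ℕ), by omega⟩ ∈ T.image τ := hgmem ⟨z - 1 - (m : ℕ), by omega⟩
    obtain ⟨j, hj1, hj2⟩ := Finset.mem_image.mp hmm
    exact ⟨j, hj1, hj2⟩
  choose i hiT hiτ using hmem
  refine ⟨i, ?_, ?_, ?_⟩
  · intro a b hab
    have h1 := hiτ a
    have h2 := hiτ b
    rw [hab, h2] at h1
    have := g.injective h1
    have hval : z - 1 - (b : ℕ) = z - 1 - (a : ℕ) := congrArg Fin.val this
    have ha := a.isLt
    have hb := b.isLt
    exact Fin.ext (by omega)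
  · intro m; exact (hTS _ (hiT m)).1
  · intro m
    have hjS := hTS _ (hiT m)
    have hb := hkey _ hjS
    have hτge : (z - 1 - (m : ℕ) : ℕ) ≤ τ (i m) := by
      rw [hiτ m]
      simpa using hgle ⟨z - 1 - (m : ℕ), by omega⟩
    have hm := m.isLt
    have hcast : ((z : ℝ) - 1 - (m : ℕ)) = ((z - 1 - (m : ℕ) : ℕ) : ℝ) := by
      push_cast [Nat.cast_sub (by omega : (m:ℕ) ≤ z - 1), Nat.cast_sub (by omega : 1 ≤ z)]
      ring
    rw [hcast]
    calc ((z - 1 - (m : ℕ) : ℕ) : ℝ) * Δdec (i m)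
        ≤ (τ (i m) : ℝ) * Δdec (i m) := by
          apply mul_le_mul_of_nonneg_right _ (hdec (i m)).le
          exact_mod_cast hτge
      _ < v0 (i m) := hb

theorem backward_dir {N M : ℕ}
    (v0 : Fin N → ℝ) (Δinc : Fin N → Fin M → ℝ) (Δdec : Fin N → ℝ)
    (hv0 : ∀ j, 0 < v0 j ∧ v0 j < 1) (hdec : ∀ j, 0 < Δdec j)
    (hA : Assumption1 Δinc Δdec)
    (V' : Finset (Fin N)) (h : Fin M) (z : ℕ) (hz : z ≤ V'.card)
    (i : Fin z → Fin N) (hinj : Function.Injective i) (hiV' : ∀ m, i m ∈ V')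
    (hbound : ∀ m : Fin z, ((z : ℝ) - 1 - (m : ℕ)) * Δdec (i m) < v0 (i m)) :
    (∃ u : ℕ → Fin M → Option (Fin N),
        (∀ t h', h' ≠ h → u t h' = none) ∧
        (∀ t j, u t h = some j → j ∈ V') ∧
        z ≤ Set.ncard {j | j ∈ V' ∧ permRepaired v0 Δinc Δdec u j}) := by
  classical
  rcases Nat.eq_zero_or_pos z with rfl | hz0
  · exact ⟨fun _ _ => none, fun _ _ _ => rfl, fun t j hj => by simp at hj,
      Nat.zero_le _⟩
  obtain ⟨z', rfl⟩ : ∃ z', z = z' + 1 := ⟨z - 1, by omega⟩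
  have hzN : z' + 1 ≤ N := le_trans hz (le_trans (Finset.card_le_univ V') (by simp))
  set idx : ℕ → Fin (z' + 1) := fun t => ⟨z' - t % (z' + 1), Nat.lt_succ_of_le (Nat.sub_le _ _)⟩
    with hidx
  set u : ℕ → Fin M → Option (Fin N) :=
    fun t h' => if h' = h then some (i (idx t)) else none with hu
  have hmodP : ∀ t : ℕ, t % (z' + 1) ≤ z' := fun t => Nat.lt_succ_iff.mp (Nat.mod_lt t (Nat.succ_pos z'))
  -- only h targets, and at time t it targets i (idx t)
  have huniq : ∀ (t : ℕ) (h' : Fin M) (j : Fin N), u t h' = some j → h' = h ∧ j = i (idx t) := by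
    intro t h' j hj
    by_cases he : h' = h
    · subst he
      simp only [hu, if_pos rfl, Option.some_inj] at hj
      exact ⟨rfl, hj.symm⟩
    · simp only [hu, if_neg he] at hj; exact absurd hj (by simp)
  refine ⟨u, ?_, ?_, ?_⟩
  · intro t h' hne; simp only [hu, if_neg hne]
  · intro t j hj; obtain ⟨-, rfl⟩ := huniq t h j hj; exact hiV' _
  -- the main work : each i m is permanently repaired
  have hperm : ∀ m : Fin (z' + 1), permRepaired v0 Δinc Δdec u (i m) := by
    intro m
    set j := i m with hj
    set s0 := z' - (m : ℕ) with hs0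
    have hm : (m : ℕ) ≤ z' := Nat.lt_succ_iff.mp m.isLt
    -- targeting characterization
    have hnt_of : ∀ t : ℕ, t % (z' + 1) ≠ s0 → ¬ ∃ h', u t h' = some j := by
      rintro t hne ⟨h', hh'⟩
      obtain ⟨-, hji⟩ := huniq t h' j hh'
      have : idx t = m := hinj hji.symm
      have hval : z' - t % (z' + 1) = (m : ℕ) := congrArg Fin.val this
      have := hmodP t
      omega
    have htag : ∀ t : ℕ, t % (z' + 1) = s0 → u t h = some j := by
      intro t ht
      have : idx t = m := by
        apply Fin.ext
        simp only [hidx]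
        omega
      simp only [hu, if_pos rfl, this, hj]
    -- constants
    set δ : ℝ := Δinc j h - (z' : ℝ) * Δdec j with hδdef
    have hδ : 0 < δ := by
      have h1 := (hA j h).1
      have h2 : (z' : ℝ) ≤ (N : ℝ) - 1 := by
        have : ((z' + 1 : ℕ) : ℝ) ≤ (N : ℝ) := Nat.cast_le.mpr hzN
        push_cast at this; linarith
      have h3 : (z' : ℝ) * Δdec j ≤ ((N : ℝ) - 1) * Δdec j :=
        mul_le_mul_of_nonneg_right h2 (hdec j).le
      simp only [hδdef]; linarith
    set x0 : ℝ := v0 j - (s0 : ℝ) * Δdec j with hx0def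
    have hx0pos : 0 < x0 := by
      have hb := hbound m
      have hcast : ((z' + 1 : ℕ) : ℝ) - 1 - ((m : ℕ) : ℝ) = ((s0 : ℕ) : ℝ) := by
        push_cast [hs0, Nat.cast_sub hm]; ring
      rw [hcast] at hb
      simp only [hx0def]; linarith
    have hx0lt1 : x0 < 1 := by
      have : (0:ℝ) ≤ (s0 : ℝ) * Δdec j := mul_nonneg (Nat.cast_nonneg _) (hdec j).le
      have := (hv0 j).2
      simp only [hx0def]; linarith
    -- base : health at time s0
    have hbase : health v0 Δinc Δdec u s0 j = x0 := by
      have h0 : health v0 Δinc Δdec u 0 j = v0 j := rfl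
      have := health_decay v0 Δinc Δdec u (hv0 j).2 h0 s0
        (by simpa [hx0def] using hx0pos) (hdec j)
        (fun s hs1 hs2 => hnt_of s (by
          have : s % (z' + 1) = s := Nat.mod_eq_of_lt (by omega)
          omega))
      simpa [hx0def] using this
    -- helper : within a cycle, non-target times
    have hmodne : ∀ d : ℕ, 1 ≤ d → d ≤ z' → (s0 + d) % (z' + 1) ≠ s0 := by
      intro d hd1 hd2
      rcases lt_or_ge (s0 + d) (z' + 1) with hlt | hge
      · rw [Nat.mod_eq_of_lt hlt]; omega
      · rw [Nat.mod_eq_sub_mod hge, Nat.mod_eq_of_lt (by omega)]; omega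
    -- main induction
    have hclaim : ∀ k : ℕ, permRepaired v0 Δinc Δdec u j ∨
        (health v0 Δinc Δdec u (s0 + k * (z' + 1)) j = x0 + k * δ ∧ x0 + (k : ℝ) * δ < 1) := by
      intro k
      induction k with
      | zero => right; simpa using ⟨hbase, hx0lt1⟩
      | succ k ih =>
        rcases ih with hdone | ⟨hval, hlt⟩
        · left; exact hdone
        set T := s0 + k * (z' + 1) with hT
        set v : ℝ := x0 + (k : ℝ) * δ with hv
        have hvpos : 0 < v := by
          have : (0:ℝ) ≤ (k : ℝ) * δ := mul_nonneg (Nat.cast_nonneg _) hδ.le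
          simp only [hv]; linarith
        have hTmod : T % (z' + 1) = s0 := by
          simp only [hT, Nat.add_mul_mod_self_right]
          exact Nat.mod_eq_of_lt (by omega)
        have hx : ∃ h', u T h' = some j := ⟨h, htag T hTmod⟩
        have hch : hx.choose = h := (huniq T hx.choose j hx.choose_spec).1
        have hstep : health v0 Δinc Δdec u (T + 1) j = min 1 (v + Δinc j h) := by
          rw [health_succ]
          simp only [hval, ← hv]
          rw [if_neg (ne_of_lt hlt), if_neg (ne_of_gt hvpos), dif_pos hx, hch]
        rcases le_or_gt 1 (v + Δinc j h) with hbig | hsmall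
        · left
          exact ⟨T + 1, by rw [hstep, min_eq_left hbig]⟩
        · right
          have h1 : health v0 Δinc Δdec u (T + 1) j = v + Δinc j h := by
            rw [hstep, min_eq_right hsmall.le]
          have hntc : ∀ s, T + 1 ≤ s → s < T + 1 + z' → ¬ ∃ h', u s h' = some j := by
            intro s hs1 hs2
            apply hnt_of
            have hsplit : s = s0 + (s - T) + k * (z' + 1) := by omega
            rw [hsplit, Nat.add_mul_mod_self_right]
            exact hmodne (s - T) (by omega) (by omega)
          have hdec2 := health_decay v0 Δinc Δdec u hsmall h1 z'
            (by simp only [hδdef] at hδ ⊢; linarith) (hdec j) hntc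
          have htime : T + 1 + z' = s0 + (k + 1) * (z' + 1) := by simp only [hT]; ring
          constructor
          · rw [← htime]
            rw [hdec2]
            push_cast
            simp only [hv, hδdef]
            ring
          · have : (0:ℝ) ≤ (z' : ℝ) * Δdec j := mul_nonneg (Nat.cast_nonneg _) (hdec j).le
            push_cast
            simp only [hv, hδdef] at hsmall ⊢
            linarith
    -- conclude by Archimedes
    by_contra hnp
    obtain ⟨k, hk⟩ := exists_nat_gt ((1 - x0) / δ)
    have h2 := (hclaim k).resolve_left hnp
    rw [div_lt_iff₀ hδ] at hk
    linarith [h2.2]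
  -- cardinality
  have hsub : Set.range i ⊆ {j | j ∈ V' ∧ permRepaired v0 Δinc Δdec u j} := by
    rintro _ ⟨m, rfl⟩
    exact ⟨hiV' m, hperm m⟩
  have hcard : (Set.range i).ncard = z' + 1 := by
    rw [← Set.image_univ, Set.ncard_image_of_injective _ hinj, Set.ncard_univ,
      Nat.card_eq_fintype_card, Fintype.card_fin]
  calc z' + 1 = (Set.range i).ncard := hcard.symm
    _ ≤ _ := Set.ncard_le_ncard hsub (Set.toFinite _)

/-- Lemma 1: under Assumption 1, a single entity `h` can permanently repair at
least `z` of the nodes of `V'` via some repair sequence iff there is a set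
`{i_1, …, i_z} ⊆ V'` with `v_0^{i_j} > (z − j)·Δ_dec^{i_j}` for all `j`. -/
theorem repair_z_nodes_iff {N M : ℕ} (hN : 2 ≤ N) (hM : 1 ≤ M)
    (v0 : Fin N → ℝ) (Δinc : Fin N → Fin M → ℝ) (Δdec : Fin N → ℝ)
    (hv0 : ∀ j, 0 < v0 j ∧ v0 j < 1) (hdec : ∀ j, 0 < Δdec j)
    (hinc : ∀ j h, 0 < Δinc j h) (hA : Assumption1 Δinc Δdec)
    (V' : Finset (Fin N)) (hV' : 2 ≤ V'.card)
    (h : Fin M) (z : ℕ) (hz : z ≤ V'.card) :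
    (∃ u : ℕ → Fin M → Option (Fin N),
        (∀ t h', h' ≠ h → u t h' = none) ∧
        (∀ t j, u t h = some j → j ∈ V') ∧
        z ≤ Set.ncard {j | j ∈ V' ∧ permRepaired v0 Δinc Δdec u j}) ↔
      (∃ i : Fin z → Fin N, Function.Injective i ∧ (∀ m, i m ∈ V') ∧
        ∀ m : Fin z, ((z : ℝ) - 1 - (m : ℕ)) * Δdec (i m) < v0 (i m)) := by
  constructor
  · rintro ⟨u, hu1, hu2, hu3⟩
    exact forward_dir v0 Δinc Δdec hv0 hdec V' h z u hu1 hu2 hu3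
  · rintro ⟨i, hinj, hiV', hbound⟩
    exact backward_dir v0 Δinc Δdec hv0 hdec hA V' h z hz i hinj hiV' hbound
end

section
/- Suppose Assumption 1 holds and a set V' ⊆ V is given. Consider the greedy procedure that starts with Y = ∅ and z = 0 and repeats: if there is no node j ∈ V' with ⌈v_0^j / Δ_dec^j⌉ > z, stop; otherwise pick the node j ∈ V' with the lowest value of ⌈v_0^j / Δ_dec^j⌉ among those satisfying ⌈v_0^j / Δ_dec^j⌉ > z, remove j from V', add it to Y, and set z := z + 1. Let Y be the resulting set and z = |Y|. Then z is the largest number such that there exists a set {i_1, …, i_z} ⊆ V' satisfying v_0^{i_j} > (z − j)·Δ_dec^{i_j} for all j ∈ {1, …, z}. -/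
open Classical ENNReal NNReal

def GreedyOutput {N : ℕ} (v0 Δdec : Fin N → ℝ) (B Y : Finset (Fin N)) : Prop :=
  Y ⊆ B ∧
  ∃ y : Fin Y.card → Fin N,
    Function.Injective y ∧ (∀ k, y k ∈ Y) ∧
    (∀ k : Fin Y.card,
      ((k : ℕ) : ℤ) < ⌈v0 (y k) / Δdec (y k)⌉ ∧
      ∀ j ∈ B, (∀ k' : Fin Y.card, k' < k → j ≠ y k') →
        ((k : ℕ) : ℤ) < ⌈v0 j / Δdec j⌉ → ⌈v0 (y k) / Δdec (y k)⌉ ≤ ⌈v0 j / Δdec j⌉) ∧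
    (∀ j ∈ B, (∀ k, j ≠ y k) → ⌈v0 j / Δdec j⌉ ≤ (Y.card : ℤ))


/-- Lemma 2: the greedy procedure (encoded by the predicate `GreedyOutput`,
which records a run of Algorithm 1 on the set `V'`) returns a set `Y` whose
cardinality is the largest `z` for which there is a set `{i_1, …, i_z} ⊆ V'`
with `v_0^{i_j} > (z − j)·Δ_dec^{i_j}` for all `j ∈ {1, …, z}`. -/
theorem greedy_card_isGreatest {N M : ℕ} (hN : 2 ≤ N) (hM : 1 ≤ M)
    (v0 : Fin N → ℝ) (Δinc : Fin N → Fin M → ℝ) (Δdec : Fin N → ℝ)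
    (hv0 : ∀ j, 0 < v0 j ∧ v0 j < 1) (hdec : ∀ j, 0 < Δdec j)
    (hinc : ∀ j h, 0 < Δinc j h) (hA : Assumption1 Δinc Δdec)
    (V' : Finset (Fin N)) (Y : Finset (Fin N))
    (hY : GreedyOutput v0 Δdec V' Y) :
    IsGreatest {z' : ℕ | ∃ i : Fin z' → Fin N, Function.Injective i ∧ (∀ m, i m ∈ V') ∧
        ∀ m : Fin z', ((z' : ℝ) - 1 - (m : ℕ)) * Δdec (i m) < v0 (i m)} Y.card := by
  obtain ⟨hYB, y, hinj, hymem, hcond, hfinal⟩ := hY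
  -- `y` is surjective onto `Y`
  have himg : Finset.univ.image y = Y := by
    apply Finset.eq_of_subset_of_card_le
    · intro j hj
      obtain ⟨k, _, rfl⟩ := Finset.mem_image.mp hj
      exact hymem k
    · rw [Finset.card_image_of_injective _ hinj, Finset.card_univ, Fintype.card_fin]
  have hsur : ∀ j ∈ Y, ∃ k, y k = j := by
    intro j hj
    rw [← himg] at hj
    obtain ⟨k, _, hk⟩ := Finset.mem_image.mp hj
    exact ⟨k, hk⟩
  constructor
  · -- membership: Y.card is achieved
    refine ⟨fun m => y ⟨Y.card - 1 - m.val, by have := m.isLt; omega⟩, ?_, ?_, ?_⟩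
    · intro m₁ m₂ h
      have h' := congrArg Fin.val (hinj h)
      simp only at h'
      have h1 := m₁.isLt
      have h2 := m₂.isLt
      exact Fin.ext (by omega)
    · intro m
      exact hYB (hymem _)
    · intro m
      have hm := m.isLt
      have h1 := (hcond ⟨Y.card - 1 - m.val, by omega⟩).1
      have h2 : ((Y.card - 1 - m.val : ℕ) : ℝ) <
          v0 (y ⟨Y.card - 1 - m.val, by omega⟩) / Δdec (y ⟨Y.card - 1 - m.val, by omega⟩) := by
        exact_mod_cast Int.lt_ceil.mp h1
      have h3 := (lt_div_iff₀ (hdec _)).mp h2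
      have h4 : ((Y.card : ℝ) - 1 - (m.val : ℕ)) = ((Y.card - 1 - m.val : ℕ) : ℝ) := by
        rw [show Y.card - 1 - m.val = Y.card - (1 + m.val) from by omega,
          Nat.cast_sub (by omega)]
        push_cast
        ring
      rw [h4]
      exact h3
  · -- upper bound
    intro s hs
    obtain ⟨i, hiinj, hiV, hicond⟩ := hs
    have hc : ∀ m : Fin s, ((s : ℤ) - 1 - (m.val : ℤ)) < ⌈v0 (i m) / Δdec (i m)⌉ := by
      intro m
      rw [Int.lt_ceil]
      push_cast
      exact (lt_div_iff₀ (hdec _)).mpr (hicond m)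
    by_cases hall : ∀ m, i m ∈ Y
    · have himg2 : (Finset.univ.image i).card = s := by
        rw [Finset.card_image_of_injective _ hiinj, Finset.card_univ, Fintype.card_fin]
      calc s = (Finset.univ.image i).card := himg2.symm
        _ ≤ Y.card := Finset.card_le_card (fun j hj => by
            obtain ⟨m, _, rfl⟩ := Finset.mem_image.mp hj
            exact hall m)
    · push_neg at hall
      obtain ⟨m₀, hm₀⟩ := hall
      set T : Finset (Fin s) := Finset.univ.filter (fun m => i m ∉ Y) with hT
      have hTne : T.Nonempty := ⟨m₀, by simp [hT, hm₀]⟩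
      obtain ⟨mm, hmmT, hmax⟩ :=
        Finset.exists_max_image T (fun m => ⌈v0 (i m) / Δdec (i m)⌉) hTne
      have hnotY : i mm ∉ Y := by
        simpa [hT] using hmmT
      set v : ℤ := ⌈v0 (i mm) / Δdec (i mm)⌉ with hv
      have hvz : v ≤ (Y.card : ℤ) :=
        hfinal (i mm) (hiV mm) (fun k heq => hnotY (heq ▸ hymem k))
      have hv1 : 1 ≤ v := by
        have h1 := hc mm
        have h2 := mm.isLt
        omega
      set vn : ℕ := v.toNat with hvn
      have hvnz : vn ≤ Y.card := by omega
      by_cases hsvn : s ≤ vn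
      · omega
      push_neg at hsvn
      -- picks with small ceiling: at least vn of them
      set A : Finset (Fin Y.card) :=
        Finset.univ.filter (fun k => ⌈v0 (y k) / Δdec (y k)⌉ ≤ v) with hA
      set B : Finset (Fin Y.card) :=
        Finset.univ.filter (fun k => ¬ (⌈v0 (y k) / Δdec (y k)⌉ ≤ v)) with hB
      have hAcard : vn ≤ A.card := by
        have := Finset.card_le_card_of_injOn
          (f := fun kk : Fin vn => (⟨kk.val, by have := kk.isLt; omega⟩ : Fin Y.card))
          (s := Finset.univ) (t := A)
          (fun kk _ => by
            simp only [hA, Finset.mem_coe, Finset.mem_filter, Finset.mem_univ, true_and]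
            apply (hcond _).2 (i mm) (hiV mm)
              (fun k' _ heq => hnotY (heq ▸ hymem k'))
            have := kk.isLt
            simp only []
            omega)
          (fun a _ b _ hab => by
            have := congrArg Fin.val hab
            exact Fin.ext (by simpa using this))
        simpa using this
      have hABcard : A.card + B.card = Y.card := by
        rw [hA, hB]
        rw [Finset.card_filter_add_card_filter_not]
        simp
      -- nodes of the candidate family with large ceiling
      set D : Finset (Fin s) :=
        Finset.univ.filter (fun m => v < ⌈v0 (i m) / Δdec (i m)⌉) with hD
      set C : Finset (Fin N) := Y.filter (fun j => v < ⌈v0 j / Δdec j⌉) with hC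
      have hDC : D.card ≤ C.card := by
        apply Finset.card_le_card_of_injOn i
        · intro m hm
          simp only [hD, Finset.mem_coe, Finset.mem_filter, Finset.mem_univ, true_and] at hm
          simp only [hC, Finset.mem_coe, Finset.mem_filter]
          refine ⟨?_, hm⟩
          by_contra hnot
          have hmT : m ∈ T := by simp [hT, hnot]
          have := hmax m hmT
          omega
        · exact fun a _ b _ hab => hiinj hab
      have hCB : C.card ≤ B.card := by
        have hsub : C ⊆ B.image y := by
          intro j hj
          simp only [hC, Finset.mem_filter] at hj
          obtain ⟨k, rfl⟩ := hsur j hj.1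
          exact Finset.mem_image.mpr ⟨k, by simp [hB, not_le, hj.2], rfl⟩
        calc C.card ≤ (B.image y).card := Finset.card_le_card hsub
          _ ≤ B.card := Finset.card_image_le
      have hDcard : s - vn ≤ D.card := by
        have := Finset.card_le_card_of_injOn
          (f := fun kk : Fin (s - vn) => (⟨kk.val, by have := kk.isLt; omega⟩ : Fin s))
          (s := Finset.univ) (t := D)
          (fun kk _ => by
            simp only [hD, Finset.mem_coe, Finset.mem_filter, Finset.mem_univ, true_and]
            have h1 := hc ⟨kk.val, by have := kk.isLt; omega⟩
            have h2 := kk.isLt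
            simp only [] at h1 ⊢
            omega)
          (fun a _ b _ hab => by
            have := congrArg Fin.val hab
            exact Fin.ext (by simpa using this))
        simpa using this
      omega
end

section
/- Suppose Assumption 1 holds. Then for any set U ⊆ V of nodes, the maximum number of nodes of U that a single entity can permanently repair (over all repair sequences of that entity) is the same for every entity h ∈ W; in particular it equals the largest z for which there exists a set {i_1, …, i_z} ⊆ U with v_0^{i_j} > (z − j)·Δ_dec^{i_j} for all j ∈ {1, …, z}. -/
open Classical ENNReal NNReal

section Aux

variable {N M : ℕ} {v0 : Fin N → ℝ} {Δinc : Fin N → Fin M → ℝ} {Δdec : Fin N → ℝ}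
  {u : ℕ → Fin M → Option (Fin N)}

lemma health_succ_eq (t : ℕ) (j : Fin N) :
    health v0 Δinc Δdec u (t+1) j =
      if health v0 Δinc Δdec u t j = 1 then 1
      else if health v0 Δinc Δdec u t j = 0 then 0
      else if hx : ∃ h, u t h = some j then
        min 1 (health v0 Δinc Δdec u t j + Δinc j hx.choose)
      else max 0 (health v0 Δinc Δdec u t j - Δdec j) := rfl

/-- decay formula while never targeted -/
lemma health_decay_s5 (j : Fin N) (hvp : 0 < v0 j) (hv1 : v0 j < 1) (hd : 0 ≤ Δdec j)
    (t : ℕ) (hnt : ∀ t' < t, ¬ ∃ h, u t' h = some j) :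
    health v0 Δinc Δdec u t j = max 0 (v0 j - t * Δdec j) := by
  induction t with
  | zero => simpa [health] using (max_eq_right hvp.le).symm
  | succ t ih =>
    have ih' := ih (fun t' ht' => hnt t' (ht'.trans (Nat.lt_succ_self t)))
    have hnt' := hnt t (Nat.lt_succ_self t)
    have htd : (t : ℝ) * Δdec j ≤ (t+1 : ℕ) * Δdec j := by
      push_cast; nlinarith [Nat.cast_nonneg (α := ℝ) t]
    rcases le_or_gt (v0 j - t * Δdec j) 0 with hle | hpos
    · have h0 : health v0 Δinc Δdec u t j = 0 := by rw [ih', max_eq_left hle]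
      rw [health_succ_eq, h0, if_neg (by norm_num), if_pos rfl]
      rw [max_eq_left (by push_cast at htd ⊢; linarith)]
    · have hv : health v0 Δinc Δdec u t j = v0 j - t * Δdec j := by
        rw [ih', max_eq_right hpos.le]
      have hlt1 : v0 j - t * Δdec j < 1 := by
        nlinarith [Nat.cast_nonneg (α := ℝ) t]
      rw [health_succ_eq, hv, if_neg hlt1.ne, if_neg hpos.ne', dif_neg hnt']
      congr 1
      push_cast; ring

/-- never targeted implies health stays below 1 -/
lemma health_lt_one_of_never (j : Fin N) (hvp : 0 < v0 j) (hv1 : v0 j < 1) (hd : 0 ≤ Δdec j)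
    (hnt : ∀ t, ¬ ∃ h, u t h = some j) (t : ℕ) :
    health v0 Δinc Δdec u t j < 1 := by
  rw [health_decay_s5 j hvp hv1 hd t (fun t' _ => hnt t')]
  apply max_lt one_pos
  nlinarith [Nat.cast_nonneg (α := ℝ) t]

lemma health_zero_absorb (j : Fin N) (t : ℕ)
    (h0 : health v0 Δinc Δdec u t j = 0) :
    ∀ k, health v0 Δinc Δdec u (t + k) j = 0 := by
  intro k
  induction k with
  | zero => exact h0
  | succ k ih =>
    rw [show t + (k+1) = (t+k) + 1 from rfl, health_succ_eq, ih,
      if_neg (by norm_num), if_pos rfl]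

/-- key upper-bound lemma: a permanently repaired node must be targeted, and its
first targeting time `s` satisfies `s * Δdec j < v0 j` -/
lemma ub_key (h : Fin M) (honly : ∀ t h', h' ≠ h → u t h' = none)
    (j : Fin N) (hv0 : 0 < v0 j) (hv1 : v0 j < 1) (hd : 0 < Δdec j)
    (hrep : permRepaired v0 Δinc Δdec u j) :
    ∃ hj : ∃ t, u t h = some j,
      (Nat.find hj : ℝ) * Δdec j < v0 j ∧ u (Nat.find hj) h = some j := by
  have hiff : ∀ t, (∃ h', u t h' = some j) ↔ u t h = some j := by
    intro t
    constructor
    · rintro ⟨h', hh'⟩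
      by_cases e : h' = h
      · rwa [e] at hh'
      · rw [honly t h' e] at hh'; cases hh'
    · exact fun hh => ⟨h, hh⟩
  have hex : ∃ t, u t h = some j := by
    by_contra hne
    push_neg at hne
    have hnt : ∀ t, ¬ ∃ h', u t h' = some j := fun t hx => hne t ((hiff t).mp hx)
    obtain ⟨t, ht⟩ := hrep
    exact absurd ht (health_lt_one_of_never j hv0 hv1 hd.le hnt t).ne
  refine ⟨hex, ?_, Nat.find_spec hex⟩
  set s := Nat.find hex with hs
  have hform : ∀ t ≤ s, health v0 Δinc Δdec u t j = max 0 (v0 j - t * Δdec j) := by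
    intro t ht
    exact health_decay_s5 j hv0 hv1 hd.le t
      (fun t' ht' hx => Nat.find_min hex (lt_of_lt_of_le ht' ht) ((hiff t').mp hx))
  by_contra hge
  push_neg at hge
  have h0 : health v0 Δinc Δdec u s j = 0 := by
    rw [hform s le_rfl, max_eq_left (by linarith)]
  obtain ⟨t, ht⟩ := hrep
  rcases le_or_gt s t with hst | hts
  · rw [show t = s + (t - s) by omega] at ht
    rw [health_zero_absorb j s h0 (t - s)] at ht
    norm_num at ht
  · rw [hform t hts.le] at ht
    have : max 0 (v0 j - t * Δdec j) < 1 := by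
      apply max_lt one_pos
      nlinarith [Nat.cast_nonneg (α := ℝ) t]
    exact absurd ht this.ne

lemma strictMono_fin_le_s5 {n : ℕ} (f : Fin n → ℕ) (hf : StrictMono f) :
    ∀ k : Fin n, (k : ℕ) ≤ f k := by
  have key : ∀ a : ℕ, ∀ k : Fin n, (k : ℕ) = a → a ≤ f k := by
    intro a
    induction a with
    | zero => intro k _; exact Nat.zero_le _
    | succ a ih =>
      intro k hk
      have hlt : a < n := by have := k.2; omega
      have h1 : (⟨a, hlt⟩ : Fin n) < k := by
        rw [Fin.lt_def]; simp; omega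
      have h2 := ih ⟨a, hlt⟩ rfl
      have h3 := hf h1
      omega
  exact fun k => key _ k rfl

end Aux

/-- Under Assumption 1, for any set `U` of nodes the maximum number of nodes of
`U` that a single entity can permanently repair is the same for every entity
`h`, and equals the largest `z` for which there is a set `{i_1, …, i_z} ⊆ U`
with `v_0^{i_j} > (z − j)·Δ_dec^{i_j}` for all `j`. -/
theorem max_repairable_entity_independent {N M : ℕ} (hN : 2 ≤ N) (hM : 1 ≤ M) (hMN : M ≤ N)
    (v0 : Fin N → ℝ) (Δinc : Fin N → Fin M → ℝ) (Δdec : Fin N → ℝ)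
    (hv0 : ∀ j, 0 < v0 j ∧ v0 j < 1) (hdec : ∀ j, 0 < Δdec j)
    (hinc : ∀ j h, 0 < Δinc j h) (hA : Assumption1 Δinc Δdec)
    (U : Finset (Fin N)) :
    ∃ z : ℕ,
      IsGreatest {z' : ℕ | ∃ i : Fin z' → Fin N, Function.Injective i ∧ (∀ m, i m ∈ U) ∧
          ∀ m : Fin z', ((z' : ℝ) - 1 - (m : ℕ)) * Δdec (i m) < v0 (i m)} z ∧
      ∀ h : Fin M,
        IsGreatest {n : ℕ | ∃ u : ℕ → Fin M → Option (Fin N),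
          (∀ t h', h' ≠ h → u t h' = none) ∧
          (∀ t j, u t h = some j → j ∈ U) ∧
          n = Set.ncard {j | j ∈ U ∧ permRepaired v0 Δinc Δdec u j}} z := by
  classical
  set A := {z' : ℕ | ∃ i : Fin z' → Fin N, Function.Injective i ∧ (∀ m, i m ∈ U) ∧
      ∀ m : Fin z', ((z' : ℝ) - 1 - (m : ℕ)) * Δdec (i m) < v0 (i m)} with hAdef
  have hA0 : 0 ∈ A := ⟨Fin.elim0, fun a => a.elim0, fun m => m.elim0, fun m => m.elim0⟩
  have hAbd : ∀ n ∈ A, n ≤ N := by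
    rintro n ⟨i, hi, -, -⟩
    simpa using Fintype.card_le_of_injective i hi
  set z := Nat.findGreatest (· ∈ A) N with hzdef
  have hzA : z ∈ A := Nat.findGreatest_spec (Nat.zero_le N) hA0
  have hzmax : ∀ n ∈ A, n ≤ z := by
    intro n hn
    by_contra hlt
    push_neg at hlt
    exact Nat.findGreatest_is_greatest hlt (hAbd n hn) hn
  refine ⟨z, ⟨hzA, fun n hn => hzmax n hn⟩, ?_⟩
  intro h
  constructor
  · ----------------------------------------------------------------
    -- achievability: z is attained by entity h
    ----------------------------------------------------------------
    obtain ⟨i, hinj, hiU, hlti⟩ := hzA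
    rcases Nat.eq_zero_or_pos z with hz0 | hzpos
    · refine ⟨fun _ _ => none, fun _ _ _ => rfl, fun t j hj => by simp at hj, ?_⟩
      have hempty : {j | j ∈ U ∧ permRepaired v0 Δinc Δdec (fun _ _ => none) j} = ∅ := by
        ext j
        simp only [Set.mem_setOf_eq, Set.mem_empty_iff_false, iff_false, not_and]
        intro _ hrep
        obtain ⟨t, ht⟩ := hrep
        have hnt : ∀ t, ¬ ∃ h', (fun _ _ => none : ℕ → Fin M → Option (Fin N)) t h' = some j := by
          rintro t ⟨h', hh'⟩; cases hh'
        exact absurd ht (health_lt_one_of_never j (hv0 j).1 (hv0 j).2 (hdec j).le hnt t).ne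
      rw [hempty, Set.ncard_empty, hz0]
    · obtain ⟨idx, hidx⟩ : ∃ idx : ℕ → Fin z, ∀ t, (idx t : ℕ) = z - 1 - t % z :=
        ⟨fun t => ⟨z - 1 - t % z, by omega⟩, fun t => rfl⟩
      set u : ℕ → Fin M → Option (Fin N) :=
        fun t h' => if h' = h then some (i (idx t)) else none with hu
      have htar : ∀ t (j : Fin N), (∃ h', u t h' = some j) ↔ j = i (idx t) := by
        intro t j
        constructor
        · rintro ⟨h', hh'⟩
          by_cases e : h' = h
          · subst e
            simp only [hu, if_pos rfl, Option.some_inj] at hh'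
            exact hh'.symm
          · simp only [hu, if_neg e] at hh'
            exact nomatch hh'
        · rintro rfl; exact ⟨h, by simp [hu]⟩
      -- targeted step
      have hstepB : ∀ t (j : Fin N), j = i (idx t) → health v0 Δinc Δdec u t j ≠ 1 →
          health v0 Δinc Δdec u t j ≠ 0 →
          health v0 Δinc Δdec u (t+1) j
            = min 1 (health v0 Δinc Δdec u t j + Δinc j h) := by
        intro t j hj h1 h0
        have hx : ∃ h', u t h' = some j := (htar t j).mpr hj
        have hch : hx.choose = h := by
          by_contra e
          have hc := hx.choose_spec
          have hcu : u t hx.choose = none := by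
            simp only [hu]
            exact if_neg e
          rw [hcu] at hc
          exact nomatch hc
        rw [health_succ_eq, if_neg h1, if_neg h0, dif_pos hx, hch]
      -- decay run
      have hstepA : ∀ (k t0 : ℕ) (j : Fin N) (a : ℝ),
          health v0 Δinc Δdec u t0 j = a → a < 1 → 0 < a - k * Δdec j →
          (∀ s, s < k → i (idx (t0 + s)) ≠ j) →
          health v0 Δinc Δdec u (t0 + k) j = a - k * Δdec j := by
        intro k
        induction k with
        | zero => intro t0 j a ha _ _ _; simpa using ha
        | succ k ih =>
          intro t0 j a ha ha1 hpos hnt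
          have hd := hdec j
          have hkc : (k : ℝ) * Δdec j < (k+1 : ℕ) * Δdec j := by push_cast; nlinarith
          have hk : health v0 Δinc Δdec u (t0 + k) j = a - k * Δdec j :=
            ih t0 j a ha ha1 (by push_cast at hpos ⊢; linarith)
              (fun s hs => hnt s (hs.trans (Nat.lt_succ_self k)))
          have hne : ¬ ∃ h', u (t0+k) h' = some j :=
            fun hx => hnt k (Nat.lt_succ_self k) ((htar _ _).mp hx).symm
          have hkpos : 0 < a - k * Δdec j := by push_cast at hpos ⊢; linarith
          have hklt : a - k * Δdec j < 1 := by nlinarith [Nat.cast_nonneg (α := ℝ) k]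
          rw [show t0 + (k+1) = (t0+k) + 1 from rfl, health_succ_eq, hk,
            if_neg hklt.ne, if_neg hkpos.ne', dif_neg hne,
            max_eq_right (by push_cast at hpos ⊢; linarith)]
          push_cast; ring
      -- each selected node gets permanently repaired
      have hrepall : ∀ m : Fin z, permRepaired v0 Δinc Δdec u (i m) := by
        intro m
        set j := i m with hj
        have hdj := hdec j
        have hik : ∀ t, i (idx t) = j ↔ t % z = z - 1 - m.1 := by
          intro t
          constructor
          · intro hh
            have h1 := congrArg Fin.val (hinj hh)
            rw [hidx t] at h1
            have := m.2
            have := Nat.mod_lt t hzpos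
            omega
          · intro hh
            congr 1
            apply Fin.ext
            rw [hidx t, hh]
            have := m.2
            omega
        set r := z - 1 - m.1 with hr
        have hrlt : r < z := by omega
        have hrm : (r : ℝ) = (z : ℝ) - 1 - (m : ℕ) := by
          rw [hr, Nat.cast_sub (by have := m.2; omega), Nat.cast_sub (by omega)]
          push_cast; ring
        have hbase : 0 < v0 j - r * Δdec j := by
          have hm := hlti m
          rw [← hj] at hm
          rw [hrm]; linarith
        have hzN : z ≤ N := by simpa using Fintype.card_le_of_injective i hinj
        have hδ : 0 < Δinc j h - ((z:ℝ) - 1) * Δdec j := by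
          have h1 := (hA j h).1
          have h2 : ((z:ℝ) - 1) * Δdec j ≤ ((N:ℝ) - 1) * Δdec j := by
            apply mul_le_mul_of_nonneg_right _ hdj.le
            have : (z : ℝ) ≤ N := by exact_mod_cast hzN
            linarith
          linarith
        set δ := Δinc j h - ((z:ℝ) - 1) * Δdec j with hδdef
        set val : ℕ → ℝ := fun c => v0 j - r * Δdec j + c * δ with hval
        have hvalpos : ∀ c, 0 < val c := by
          intro c
          have : (0:ℝ) ≤ c * δ := mul_nonneg (Nat.cast_nonneg c) hδ.le
          simp only [hval]
          linarith
        have hvalsucc : ∀ c : ℕ, val (c+1) = val c + Δinc j h - ((z:ℝ) - 1) * Δdec j := by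
          intro c
          simp only [hval, hδdef]
          push_cast; ring
        have hmodr : ∀ c : ℕ, (c * z + r) % z = r := by
          intro c
          rw [Nat.mul_comm, Nat.mul_add_mod, Nat.mod_eq_of_lt hrlt]
        have hcast_zsub : ((z - 1 : ℕ) : ℝ) = (z : ℝ) - 1 := by
          rw [Nat.cast_sub (by omega)]; norm_num
        have claim : ∀ c : ℕ, permRepaired v0 Δinc Δdec u j ∨
            (health v0 Δinc Δdec u (c * z + r) j = val c ∧ val c < 1) := by
          intro c
          induction c with
          | zero =>
            right
            have hnt0 : ∀ s, s < r → i (idx (0 + s)) ≠ j := by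
              intro s hs hh
              rw [hik] at hh
              rw [Nat.zero_add, Nat.mod_eq_of_lt (hs.trans hrlt)] at hh
              omega
            have h1 : health v0 Δinc Δdec u (0 + r) j = v0 j - r * Δdec j :=
              hstepA r 0 j (v0 j) rfl (hv0 j).2 hbase hnt0
            constructor
            · rw [show 0 * z + r = 0 + r by ring, h1]
              simp [hval]
            · have hx1 : (0:ℝ) ≤ (r:ℝ) * Δdec j := mul_nonneg (Nat.cast_nonneg r) hdj.le
              have hx2 := (hv0 j).2
              simp only [hval]
              push_cast
              linarith
          | succ c ih =>
            rcases ih with hperm | ⟨hc, hc1⟩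
            · exact Or.inl hperm
            have hjt : j = i (idx (c * z + r)) := ((hik _).mpr (hmodr c)).symm
            have hstep := hstepB (c*z+r) j hjt (by rw [hc]; exact hc1.ne)
              (by rw [hc]; exact (hvalpos c).ne')
            rw [hc] at hstep
            rcases le_or_gt 1 (val c + Δinc j h) with hge | hlt1
            · exact Or.inl ⟨c*z+r+1, by rw [hstep, min_eq_left hge]⟩
            · right
              have h2 : health v0 Δinc Δdec u (c*z+r+1) j = val c + Δinc j h := by
                rw [hstep, min_eq_right hlt1.le]
              have hposnext : 0 < (val c + Δinc j h) - (z - 1 : ℕ) * Δdec j := by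
                rw [hcast_zsub]
                have := hvalpos (c+1)
                rw [hvalsucc c] at this
                linarith
              have hnt : ∀ s, s < z - 1 → i (idx (c*z+r+1+s)) ≠ j := by
                intro s hs hh
                rw [hik] at hh
                rw [show c*z+r+1+s = z*c + (r+1+s) by ring, Nat.mul_add_mod] at hh
                rcases Nat.lt_or_ge (r+1+s) z with hlt2 | hge2
                · rw [Nat.mod_eq_of_lt hlt2] at hh; omega
                · rw [Nat.mod_eq_sub_mod hge2,
                    Nat.mod_eq_of_lt (by omega)] at hh
                  omega
              have h3 := hstepA (z-1) (c*z+r+1) j (val c + Δinc j h) h2 hlt1 hposnext hnt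
              constructor
              · rw [show (c+1)*z + r = c*z+r+1 + (z-1) by
                  obtain ⟨w, hw⟩ : ∃ w, c * z = w := ⟨_, rfl⟩
                  rw [add_mul, one_mul, hw]
                  omega]
                rw [h3, hcast_zsub, hvalsucc c]
              · have hzz : (0:ℝ) ≤ ((z:ℝ) - 1) * Δdec j := by
                  apply mul_nonneg _ hdj.le
                  have h1z : (1:ℝ) ≤ (z:ℝ) := by exact_mod_cast hzpos
                  linarith
                rw [hvalsucc c]
                linarith
        -- choose c large enough
        obtain ⟨c, hcge⟩ := exists_nat_ge ((1 - (v0 j - r * Δdec j) - Δinc j h) / δ)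
        have hbig : 1 ≤ val c + Δinc j h := by
          have h1 : (1 - (v0 j - r * Δdec j) - Δinc j h) ≤ c * δ :=
            (div_le_iff₀ hδ).mp hcge
          simp only [hval]
          linarith
        rcases claim c with hperm | ⟨hc, hc1⟩
        · exact hperm
        · have hjt : j = i (idx (c * z + r)) := ((hik _).mpr (hmodr c)).symm
          have hstep := hstepB (c*z+r) j hjt (by rw [hc]; exact hc1.ne)
            (by rw [hc]; exact (hvalpos c).ne')
          rw [hc] at hstep
          exact ⟨c*z+r+1, by rw [hstep, min_eq_left hbig]⟩
      -- assemble achievability witness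
      refine ⟨u, fun t h' hne => by simp [hu, if_neg hne], fun t j' hj' => ?_, ?_⟩
      · simp only [hu, if_pos rfl, Option.some_inj] at hj'
        rw [← hj']
        exact hiU _
      · have hset : {j | j ∈ U ∧ permRepaired v0 Δinc Δdec u j} = Set.range i := by
          ext j
          simp only [Set.mem_setOf_eq, Set.mem_range]
          constructor
          · rintro ⟨hjU, hrepj⟩
            by_contra hnr
            push_neg at hnr
            have hnt : ∀ t, ¬ ∃ h', u t h' = some j :=
              fun t hx => hnr (idx t) ((htar t j).mp hx).symm
            obtain ⟨t, ht⟩ := hrepj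
            exact absurd ht (health_lt_one_of_never j (hv0 j).1 (hv0 j).2 (hdec j).le hnt t).ne
          · rintro ⟨m, rfl⟩
            exact ⟨hiU m, hrepall m⟩
        rw [hset, ← Set.image_univ, Set.ncard_image_of_injective _ hinj,
          Set.ncard_univ]
        simp
  · ----------------------------------------------------------------
    -- upper bound
    ----------------------------------------------------------------
    rintro n ⟨u, honly, hUtar, hncard⟩
    apply hzmax
    set S := {j | j ∈ U ∧ permRepaired v0 Δinc Δdec u j} with hSdef
    have hSfin : S.Finite := Set.toFinite S
    set sfun : Fin N → ℕ :=
      fun j => if hj : ∃ t, u t h = some j then Nat.find hj else 0 with hsfun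
    have hkey : ∀ j ∈ S, (sfun j : ℝ) * Δdec j < v0 j ∧ u (sfun j) h = some j := by
      intro j hj
      obtain ⟨hex, hlt, hspec⟩ := ub_key h honly j (hv0 j).1 (hv0 j).2 (hdec j) hj.2
      constructor <;> simp only [hsfun, dif_pos hex]
      · exact hlt
      · exact hspec
    have hinjS : Set.InjOn sfun S := by
      intro j hj j' hj' he
      have h1 := (hkey j hj).2
      have h2 := (hkey j' hj').2
      rw [he, h2] at h1
      exact (Option.some_inj.mp h1).symm
    set F := hSfin.toFinset with hF
    have hmemF : ∀ j, j ∈ F ↔ j ∈ S := fun j => hSfin.mem_toFinset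
    have hcardF : F.card = n := by
      rw [hncard]
      exact (Set.ncard_eq_toFinset_card S hSfin).symm
    set T := F.image sfun with hT
    have hTcard : T.card = n := by
      rw [hT, Finset.card_image_of_injOn (fun a ha b hb => hinjS ((hmemF a).mp ha) ((hmemF b).mp hb)), hcardF]
    have e := T.orderIsoOfFin hTcard
    have hmono : ∀ k : Fin n, (k : ℕ) ≤ ((e k : ℕ)) := by
      apply strictMono_fin_le_s5
      intro a b hab
      exact_mod_cast e.strictMono hab
    have hpick : ∀ k : Fin n, ∃ j, j ∈ S ∧ sfun j = (e k : ℕ) := by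
      intro k
      have hmem : ((e k : ℕ)) ∈ Finset.image sfun F := (e k).2
      rw [Finset.mem_image] at hmem
      obtain ⟨j, hjF, hje⟩ := hmem
      exact ⟨j, (hmemF j).mp hjF, hje⟩
    choose pick hpickS hpicke using hpick
    have hpickinj : Function.Injective pick := by
      intro a b hab
      have h1 : sfun (pick a) = sfun (pick b) := by rw [hab]
      rw [hpicke, hpicke] at h1
      exact e.injective (Subtype.ext h1)
    refine ⟨fun m => pick ⟨n - 1 - (m : ℕ), by have := m.isLt; omega⟩, ?_, ?_, ?_⟩
    · intro a b hab
      have h1 := hpickinj hab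
      have h2 := congrArg Fin.val h1
      simp only at h2
      apply Fin.ext
      have := a.isLt
      have := b.isLt
      omega
    · intro m
      exact (hpickS _).1
    · intro m
      have hklt : n - 1 - (m : ℕ) < n := by have := m.isLt; omega
      have h1 : (n - 1 - (m : ℕ) : ℕ) ≤ sfun (pick ⟨n - 1 - (m : ℕ), hklt⟩) := by
        rw [hpicke]
        exact hmono ⟨n - 1 - (m : ℕ), hklt⟩
      have h2 := (hkey _ (hpickS ⟨n - 1 - (m : ℕ), hklt⟩)).1
      have h3 : ((n : ℝ) - 1 - (m : ℕ)) ≤ (sfun (pick ⟨n - 1 - (m : ℕ), hklt⟩) : ℝ) := by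
        have hm := m.isLt
        calc ((n : ℝ) - 1 - (m : ℕ)) = ((n - 1 - (m : ℕ) : ℕ) : ℝ) := by
              rw [Nat.cast_sub (by omega), Nat.cast_sub (by omega)]
              push_cast; ring
          _ ≤ _ := by exact_mod_cast h1
      calc ((n : ℝ) - 1 - (m : ℕ)) * Δdec (pick ⟨n - 1 - (m : ℕ), hklt⟩)
          ≤ (sfun (pick ⟨n - 1 - (m : ℕ), hklt⟩) : ℝ)
              * Δdec (pick ⟨n - 1 - (m : ℕ), hklt⟩) :=
            mul_le_mul_of_nonneg_right h3 (hdec _).le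
        _ < v0 (pick ⟨n - 1 - (m : ℕ), hklt⟩) := h2
end

section
/- Suppose a set U_h ⊆ V of nodes is allocated to a single entity h and Assumption 2 holds. Then the sequencing policy in which entity h targets, at each time-step, the healthiest node of U_h (equivalently, the non-jumping sequence targeting the nodes of U_h in decreasing order of their initial health values) maximizes the number of nodes of U_h that are permanently repaired, over all sequencing policies of entity h. -/
open Classical ENNReal NNReal

def Assumption2 {N M : ℕ} (v0 : Fin N → ℝ) (Δinc : Fin N → Fin M → ℝ)
    (Δdec : Fin N → ℝ) (c : Fin M → NNReal) : Prop :=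
  ∃ (Δi : Fin M → ℝ) (Δd : ℝ) (c' : NNReal),
    (∀ j h, Δinc j h = Δi h) ∧ (∀ j, Δdec j = Δd) ∧ (∀ h, Δi h ≤ Δd) ∧
    (∀ h, c h = c') ∧ (∀ h, ∃ n : ℕ, 0 < n ∧ Δd = (n : ℝ) * Δi h) ∧
    (∀ j h, ∃ m : ℕ, 0 < m ∧ 1 - v0 j = (m : ℝ) * Δi h)



/-- Feasibility of a non-jumping repair schedule, in deficit units.
`T` is the elapsed time so far; an entry `a` means a node whose current
(time-0) deficit is `a`; serving it starting at elapsed time `T` requires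
`a + n*T < L` (it is still alive) and finishes at elapsed time `(n+1)*T + a`. -/
def feas (n L : ℕ) : ℕ → List ℕ → Prop
  | _, [] => True
  | T, a :: l => a + n * T < L ∧ feas n L ((n+1) * T + a) l

@[simp] lemma feas_nil (n L T : ℕ) : feas n L T [] := trivial

@[simp] lemma feas_cons (n L T a : ℕ) (l : List ℕ) :
    feas n L T (a :: l) ↔ a + n * T < L ∧ feas n L ((n+1) * T + a) l := Iff.rfl

lemma feas_mono (n L : ℕ) : ∀ (l : List ℕ) {T T' : ℕ}, T ≤ T' →
    feas n L T' l → feas n L T l := by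
  intro l
  induction l with
  | nil => intro T T' _ _; trivial
  | cons a l ih =>
    intro T T' hTT h
    refine ⟨lt_of_le_of_lt (by nlinarith) h.1, ih (by nlinarith) h.2⟩

lemma feas_lt (n L : ℕ) : ∀ (l : List ℕ) (T : ℕ), feas n L T l → ∀ x ∈ l, x < L := by
  intro l
  induction l with
  | nil => simp
  | cons a l ih =>
    intro T h x hx
    rcases List.mem_cons.1 hx with rfl | hx
    · exact lt_of_le_of_lt (Nat.le_add_right _ _) h.1
    · exact ih _ h.2 x hx

lemma feas_head_mono (n L : ℕ) {a b : ℕ} (hba : b ≤ a) {T : ℕ} {l : List ℕ}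
    (h : feas n L T (a :: l)) : feas n L T (b :: l) :=
  ⟨lt_of_le_of_lt (by omega) h.1, feas_mono n L l (by nlinarith) h.2⟩

lemma feas_swap (n L : ℕ) (hn : 1 ≤ n) {a b : ℕ} (hba : b ≤ a) {T : ℕ} {l : List ℕ}
    (h : feas n L T (a :: b :: l)) : feas n L T (b :: a :: l) := by
  obtain ⟨h1, h2, h3⟩ := h
  refine ⟨by omega, ?_, ?_⟩
  · have : a + n * ((n+1) * T + b) ≤ b + n * ((n+1) * T + a) := by nlinarith
    omega
  · exact feas_mono n L l (by nlinarith) h3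

lemma feas_move_front (n L : ℕ) (hn : 1 ≤ n) :
    ∀ (l₁ : List ℕ) (x : ℕ) (l₂ : List ℕ) (T : ℕ), (∀ y ∈ l₁, x ≤ y) →
    feas n L T (l₁ ++ x :: l₂) → feas n L T (x :: (l₁ ++ l₂)) := by
  intro l₁
  induction l₁ with
  | nil => intro x l₂ T _ h; simpa using h
  | cons a l₁ ih =>
    intro x l₂ T hmin h
    have h' : feas n L T (a :: x :: (l₁ ++ l₂)) := by
      refine ⟨h.1, ?_⟩
      exact ih x l₂ _ (fun y hy => hmin y (List.mem_cons_of_mem _ hy)) h.2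
    have := feas_swap n L hn (hmin a List.mem_cons_self) h'
    simpa using this

lemma feas_shift (n L : ℕ) : ∀ (l : List ℕ) (T : ℕ),
    feas n L (T + 1) l ↔ feas n L T (l.map (· + n)) := by
  intro l
  induction l with
  | nil => simp
  | cons a l ih =>
    intro T
    simp only [List.map_cons, feas_cons]
    have e1 : a + n * (T + 1) = (a + n) + n * T := by ring
    have e2 : (n+1) * (T+1) + a = ((n+1) * T + (a + n)) + 1 := by ring
    rw [e1, e2, ih]

lemma feas_shift_iter (n L : ℕ) : ∀ (c : ℕ) (l : List ℕ) (T : ℕ),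
    feas n L (T + c) l → feas n L T (l.map (· + n * c)) := by
  intro c
  induction c with
  | zero => intro l T h; simpa using h
  | succ c ih =>
    intro l T h
    have h1 : feas n L ((T + c) + 1) l := by
      have : T + (c+1) = (T + c) + 1 := by ring
      rwa [this] at h
    have h2 := (feas_shift n L l (T + c)).1 h1
    have h3 := ih (l.map (· + n)) T h2
    rw [List.map_map] at h3
    have : ((· + n * c) ∘ (· + n)) = (· + n * (c+1)) := by
      funext x; simp [Function.comp]; ring
    rwa [this] at h3

/-- Completion times of the non-jumping schedule with deficits `b 0, b 1, ...`
starting at elapsed time `T`: `ToffFrom n b T i` is the elapsed time when the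
service of the `i`-th node starts. -/
def ToffFrom (n : ℕ) (b : ℕ → ℕ) (T : ℕ) : ℕ → ℕ
  | 0 => T
  | i + 1 => (n+1) * ToffFrom n b T i + b i

lemma ToffFrom_shift (n : ℕ) (b : ℕ → ℕ) (T : ℕ) :
    ∀ i, ToffFrom n (fun i => b (i+1)) ((n+1) * T + b 0) i = ToffFrom n b T (i+1) := by
  intro i
  induction i with
  | zero => rfl
  | succ i ih => simp [ToffFrom, ih]

lemma feas_of_constraints (n L : ℕ) :
    ∀ (k : ℕ) (b : ℕ → ℕ) (T : ℕ),
    (∀ i < k, b i + n * ToffFrom n b T i < L) →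
    feas n L T (List.ofFn (fun i : Fin k => b i)) := by
  intro k
  induction k with
  | zero => intro b T _; simp
  | succ k ih =>
    intro b T hc
    rw [List.ofFn_succ]
    refine ⟨by simpa [ToffFrom] using hc 0 (Nat.succ_pos k), ?_⟩
    have := ih (fun i => b (i+1)) ((n+1) * T + b 0) (fun i hi => by
      have := hc (i+1) (by omega)
      rwa [ToffFrom_shift n b T i])
    simpa using this

/-- Combinatorial (deficit-level) model of the repair dynamics:
deficit `0` means permanently repaired, deficit `≥ L` means dead; a live node
loses `1` deficit when targeted and gains `n` otherwise. -/
def nstate {ι : Type*} [DecidableEq ι] (n L : ℕ) (m : ι → ℕ) (f : ℕ → Option ι) :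
    ℕ → ι → ℕ
  | 0 => m
  | t + 1 => fun j =>
      let a := nstate n L m f t j
      if a = 0 then 0
      else if L ≤ a then a
      else if f t = some j then a - 1 else a + n

section NState

variable {ι : Type*} [DecidableEq ι] (n L : ℕ) (m : ι → ℕ) (f : ℕ → Option ι)

lemma nstate_zero (j : ι) : nstate n L m f 0 j = m j := rfl

lemma nstate_succ (t : ℕ) (j : ι) :
    nstate n L m f (t+1) j =
      if nstate n L m f t j = 0 then 0
      else if L ≤ nstate n L m f t j then nstate n L m f t j
      else if f t = some j then nstate n L m f t j - 1 else nstate n L m f t j + n := rfl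

lemma nstate_absorb0 {t : ℕ} {j : ι} (h : nstate n L m f t j = 0) :
    ∀ s, nstate n L m f (t + s) j = 0 := by
  intro s
  induction s with
  | zero => simpa using h
  | succ s ih => rw [show t + (s+1) = (t+s) + 1 by ring, nstate_succ, ih]; simp

lemma nstate_absorbL {t : ℕ} {j : ι} (hL : 1 ≤ L) (h : L ≤ nstate n L m f t j) :
    ∀ s, nstate n L m f (t + s) j = nstate n L m f t j := by
  intro s
  induction s with
  | zero => rfl
  | succ s ih =>
    rw [show t + (s+1) = (t+s) + 1 by ring, nstate_succ, ih]
    have : nstate n L m f t j ≠ 0 := by omega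
    simp [this, h]

/-- A node that is repaired at time `τ` is alive (deficit in `(0,L)`) strictly before. -/
lemma nstate_alive {τ : ℕ} {j : ι} (hL : 1 ≤ L) (hτ : nstate n L m f τ j = 0)
    (hmin : ∀ t < τ, nstate n L m f t j ≠ 0) :
    ∀ t < τ, 0 < nstate n L m f t j ∧ nstate n L m f t j < L := by
  intro t ht
  refine ⟨Nat.pos_of_ne_zero (hmin t ht), ?_⟩
  by_contra hge
  push_neg at hge
  have := nstate_absorbL n L m f hL hge (τ - t)
  rw [show t + (τ - t) = τ by omega] at this
  omega

end NState

section Counting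

variable {ι : Type*} [DecidableEq ι] (n L : ℕ) (m : ι → ℕ) (f : ℕ → Option ι)

lemma nstate_count (hL : 1 ≤ L) {j : ι} {τ : ℕ}
    (hzero : nstate n L m f τ j = 0) (hmin : ∀ t < τ, nstate n L m f t j ≠ 0) :
    ∀ t ≤ τ, (nstate n L m f t j : ℤ) = (m j : ℤ) + n * t
      - (n+1) * (((Finset.range t).filter (fun r => f r = some j)).card : ℤ) := by
  intro t
  induction t with
  | zero => intro _; simp [nstate_zero]
  | succ t ih =>
    intro hle
    have ht : t < τ := by omega
    have halive := nstate_alive n L m f hL hzero hmin t ht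
    have hIH := ih (le_of_lt ht)
    have hcard : ((Finset.range (t+1)).filter (fun r => f r = some j)).card
        = ((Finset.range t).filter (fun r => f r = some j)).card
          + (if f t = some j then 1 else 0) := by
      rw [Finset.range_add_one, Finset.filter_insert]
      split_ifs with hft
      · rw [Finset.card_insert_of_notMem (by simp)]
      · simp
    rw [nstate_succ]
    have h0 : nstate n L m f t j ≠ 0 := by omega
    have hLn : ¬ L ≤ nstate n L m f t j := by omega
    simp only [h0, hLn, if_false, if_neg hLn]
    split_ifs with hft
    · rw [hcard, if_pos hft]
      have h1 : 1 ≤ nstate n L m f t j := halive.1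
      push_cast [Nat.cast_sub h1]
      push_cast at hIH
      linarith
    · rw [hcard, if_neg hft]
      push_cast
      push_cast at hIH
      linarith

lemma nstate_last_target (hL : 1 ≤ L) {j : ι} {τ : ℕ} (hm1 : 1 ≤ m j)
    (hzero : nstate n L m f τ j = 0) (hmin : ∀ t < τ, nstate n L m f t j ≠ 0) :
    0 < τ ∧ f (τ - 1) = some j := by
  have hτ : τ ≠ 0 := by
    intro h; rw [h] at hzero; rw [nstate_zero] at hzero; omega
  refine ⟨Nat.pos_of_ne_zero hτ, ?_⟩
  obtain ⟨t, rfl⟩ : ∃ t, τ = t + 1 := ⟨τ - 1, by omega⟩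
  have halive := nstate_alive n L m f hL hzero hmin t (by omega)
  rw [nstate_succ] at hzero
  have h0 : nstate n L m f t j ≠ 0 := by omega
  have hLn : ¬ L ≤ nstate n L m f t j := by omega
  simp only [h0, hLn, if_false, if_neg hLn] at hzero
  by_contra hft
  rw [show t + 1 - 1 = t by omega] at hft
  rw [if_neg hft] at hzero
  omega

lemma count_disjoint (q : ℕ) (g : ℕ → ι)
    (hg : ∀ l < q, ∀ l' < q, g l = g l' → l = l') (t : ℕ → ℕ) (Tb : ℕ)
    (ht : ∀ l < q, t l ≤ Tb) :
    (∑ l ∈ Finset.range q,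
      ((Finset.range (t l)).filter (fun r => f r = some (g l))).card) ≤ Tb := by
  classical
  calc ∑ l ∈ Finset.range q,
        ((Finset.range (t l)).filter (fun r => f r = some (g l))).card
      = ((Finset.range q).biUnion
          (fun l => (Finset.range (t l)).filter (fun r => f r = some (g l)))).card := by
        refine (Finset.card_biUnion ?_).symm
        intro x hx y hy hxy
        rw [Function.onFun, Finset.disjoint_left]
        intro r hrx hry
        simp only [Finset.mem_filter] at hrx hry
        exact hxy (hg x (by simpa using hx) y (by simpa using hy)
          (Option.some_injective _ (hrx.2.symm.trans hry.2)))
    _ ≤ (Finset.range Tb).card := by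
        apply Finset.card_le_card
        intro r hr
        simp only [Finset.mem_biUnion, Finset.mem_filter, Finset.mem_range] at hr ⊢
        obtain ⟨l, hl, hrl, _⟩ := hr
        exact lt_of_lt_of_le hrl (ht l hl)
    _ = Tb := by simp

end Counting

lemma exists_feas_of_repairs {ι : Type*} [DecidableEq ι] (n L : ℕ) (hn : 1 ≤ n) (hL : 1 ≤ L)
    (m : ι → ℕ) (f : ℕ → Option ι) (k : ℕ) (j : Fin k → ι) (hjinj : Function.Injective j)
    (hm1 : ∀ i, 1 ≤ m (j i)) (hmL : ∀ i, m (j i) < L)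
    (hrep : ∀ i, ∃ t, nstate n L m f t (j i) = 0) :
    ∃ l : List ι, l.Nodup ∧ l.length = k ∧ (∀ x ∈ l, ∃ i, x = j i) ∧ feas n L 0 (l.map m) := by
  classical
  rcases Nat.eq_zero_or_pos k with rfl | hk
  · exact ⟨[], by simp, by simp, by simp, by simp⟩
  set τι : ι → ℕ := fun x => if hx : ∃ t, nstate n L m f t x = 0 then Nat.find hx else 0
    with hτιdef
  have hτspec : ∀ i : Fin k, nstate n L m f (τι (j i)) (j i) = 0 ∧
      ∀ t < τι (j i), nstate n L m f t (j i) ≠ 0 := by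
    intro i
    have hx := hrep i
    simp only [hτιdef, dif_pos hx]
    exact ⟨Nat.find_spec hx, fun t ht => Nat.find_min hx ht⟩
  have htar : ∀ i : Fin k, 0 < τι (j i) ∧ f (τι (j i) - 1) = some (j i) := fun i =>
    nstate_last_target n L m f hL (hm1 i) (hτspec i).1 (hτspec i).2
  have hτinj : Function.Injective (fun i => τι (j i)) := by
    intro i i' he
    have h1 := (htar i).2
    have h2 := (htar i').2
    simp only at he
    rw [he] at h1
    exact hjinj (Option.some_injective _ (h1.symm.trans h2))
  set σ := Tuple.sort (fun i => τι (j i)) with hσdef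
  have hmono : StrictMono ((fun i => τι (j i)) ∘ σ) :=
    Monotone.strictMono_of_injective (Tuple.monotone_sort (fun i => τι (j i)))
      (hτinj.comp σ.injective)
  set j' : Fin k → ι := fun i => j (σ i) with hj'def
  have hj'inj : Function.Injective j' := hjinj.comp σ.injective
  set JJ : ℕ → ι := fun i => j' ⟨min i (k-1), by omega⟩ with hJJdef
  have hJJ : ∀ i (hi : i < k), JJ i = j' ⟨i, hi⟩ := by
    intro i hi
    simp only [hJJdef]
    congr 1
    simp only [Fin.mk.injEq]
    omega
  have hJJinj : ∀ l < k, ∀ l' < k, JJ l = JJ l' → l = l' := by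
    intro l hl l' hl' he
    rw [hJJ l hl, hJJ l' hl'] at he
    have := hj'inj he
    simpa using congrArg Fin.val this
  set τn : ℕ → ℕ := fun i => τι (JJ i) with hτndef
  set Mv : ℕ → ℕ := fun i => m (JJ i) with hMdef
  have hspec' : ∀ i < k, nstate n L m f (τn i) (JJ i) = 0 ∧
      ∀ t < τn i, nstate n L m f t (JJ i) ≠ 0 := by
    intro i hi
    have := hτspec (σ ⟨i, hi⟩)
    simpa only [hτndef, hJJ i hi, hj'def] using this
  have hM1 : ∀ i < k, 1 ≤ Mv i := by
    intro i hi
    have := hm1 (σ ⟨i, hi⟩)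
    simpa only [hMdef, hJJ i hi, hj'def] using this
  have hML : ∀ i < k, Mv i < L := by
    intro i hi
    have := hmL (σ ⟨i, hi⟩)
    simpa only [hMdef, hJJ i hi, hj'def] using this
  have hmono' : ∀ l i, l < i → i < k → τn l < τn i := by
    intro l i hli hi
    have hl : l < k := by omega
    have := hmono (show (⟨l, hl⟩ : Fin k) < ⟨i, hi⟩ by
      simp only [Fin.mk_lt_mk]; omega)
    simpa only [hτndef, hJJ l hl, hJJ i hi, hj'def, Function.comp] using this
  set Sn : ℕ → ℕ := fun i =>
    ((Finset.range (τn i)).filter (fun r => f r = some (JJ i))).card with hSndef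
  have hcomp : ∀ i < k, ((n : ℤ)+1) * Sn i = (Mv i : ℤ) + n * τn i := by
    intro i hi
    have := nstate_count n L m f hL (hspec' i hi).1 (hspec' i hi).2 (τn i) le_rfl
    rw [(hspec' i hi).1] at this
    push_cast at this ⊢
    simp only [hSndef, hMdef]
    push_cast
    linarith
  have hF5 : ∀ i < k, (∑ l ∈ Finset.range (i+1), Sn l) ≤ τn i := by
    intro i hi
    exact count_disjoint f (i+1) JJ
      (fun l hl l' hl' he => hJJinj l (by omega) l' (by omega) he) τn (τn i)
      (fun l hl => by
        rcases Nat.lt_or_ge l i with h | h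
        · exact le_of_lt (hmono' l i h hi)
        · have : l = i := by omega
          simp [this])
  have hF6 : ∀ p, p + 1 < k →
      (∑ l ∈ Finset.range (p+1), Sn l) +
        ((Finset.range (τn p)).filter (fun r => f r = some (JJ (p+1)))).card ≤ τn p := by
    intro p hp
    have := count_disjoint f (p+2) JJ
      (fun l hl l' hl' he => hJJinj l (by omega) l' (by omega) he)
      (fun l => if l ≤ p then τn l else τn p) (τn p)
      (fun l hl => by
        rcases Nat.lt_or_ge l p with h | h
        · simp only [if_pos (le_of_lt h)]
          exact le_of_lt (hmono' l p h (by omega))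
        · show (if l ≤ p then τn l else τn p) ≤ τn p
          split_ifs with h'
          · have : l = p := by omega
            simp [this]
          · exact le_rfl)
    rw [Finset.sum_range_succ] at this
    simp only [show ¬ (p + 1 ≤ p) by omega, if_neg, if_false] at this
    calc (∑ l ∈ Finset.range (p+1), Sn l) +
        ((Finset.range (τn p)).filter (fun r => f r = some (JJ (p+1)))).card
        = (∑ l ∈ Finset.range (p+1),
            ((Finset.range (if l ≤ p then τn l else τn p)).filter
              (fun r => f r = some (JJ l))).card) +
          ((Finset.range (τn p)).filter (fun r => f r = some (JJ (p+1)))).card := by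
          congr 1
          refine Finset.sum_congr rfl (fun l hl => ?_)
          have : l ≤ p := by simpa using Nat.lt_succ_iff.mp (Finset.mem_range.1 hl)
          simp [this, hSndef]
      _ ≤ τn p := this
  set TT : ℕ → ℕ := ToffFrom n Mv 0 with hTTdef
  have hToffsum : ∀ i, (TT (i+1) : ℤ) = (∑ l ∈ Finset.range (i+1), (Mv l : ℤ))
      + n * ∑ l ∈ Finset.range i, (TT (l+1) : ℤ) := by
    intro i
    induction i with
    | zero => simp [hTTdef, ToffFrom]
    | succ i ih =>
      have : TT (i+2) = (n+1) * TT (i+1) + Mv (i+1) := rfl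
      rw [this]
      push_cast
      rw [Finset.sum_range_succ, Finset.sum_range_succ (f := fun l => (TT (l+1) : ℤ))]
      push_cast
      linarith
  have hF7 : ∀ i < k, (TT (i+1) : ℤ) ≤ τn i := by
    intro i
    induction i using Nat.strong_induction_on with
    | _ i ih =>
      intro hi
      have h5 : ((∑ l ∈ Finset.range (i+1), Sn l : ℕ) : ℤ) ≤ (τn i : ℤ) := by
        exact_mod_cast hF5 i hi
      push_cast at h5
      have e1 : ∑ l ∈ Finset.range (i+1), ((n : ℤ)+1) * Sn l
          = ∑ l ∈ Finset.range (i+1), ((Mv l : ℤ) + n * τn l) :=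
        Finset.sum_congr rfl (fun l hl => hcomp l (by
          have := Finset.mem_range.1 hl; omega))
      rw [← Finset.mul_sum] at e1
      rw [Finset.sum_add_distrib, ← Finset.mul_sum] at e1
      have e2 : ∑ l ∈ Finset.range (i+1), (τn l : ℤ)
          = (∑ l ∈ Finset.range i, (τn l : ℤ)) + τn i := Finset.sum_range_succ _ _
      have e3 : ∑ l ∈ Finset.range i, (TT (l+1) : ℤ) ≤ ∑ l ∈ Finset.range i, (τn l : ℤ) :=
        Finset.sum_le_sum (fun l hl => ih l (Finset.mem_range.1 hl) (by
          have := Finset.mem_range.1 hl; omega))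
      have e4 := hToffsum i
      have hn' : (1 : ℤ) ≤ n := by exact_mod_cast hn
      have m1 : ((n:ℤ)+1) * (∑ l ∈ Finset.range (i+1), (Sn l : ℤ))
          ≤ ((n:ℤ)+1) * (τn i : ℤ) :=
        mul_le_mul_of_nonneg_left h5 (by linarith)
      have m2 : (n:ℤ) * (∑ l ∈ Finset.range i, (TT (l+1) : ℤ))
          ≤ (n:ℤ) * (∑ l ∈ Finset.range i, (τn l : ℤ)) :=
        mul_le_mul_of_nonneg_left e3 (by linarith)
      have m4 : (n:ℤ) * (∑ l ∈ Finset.range (i+1), (τn l : ℤ))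
          = n * (∑ l ∈ Finset.range i, (τn l : ℤ)) + n * τn i := by rw [e2]; ring
      linarith [m1, m2, e1, m4, e4]
  have hF8 : ∀ i < k, Mv i + n * TT i < L := by
    intro i hi
    match i with
    | 0 =>
      have : TT 0 = 0 := rfl
      rw [this]
      simpa using hML 0 hi
    | (p+1) =>
      have hp : p < k := by omega
      have hττ : τn p < τn (p+1) := hmono' p (p+1) (by omega) hi
      have halive := nstate_alive n L m f hL (hspec' (p+1) hi).1 (hspec' (p+1) hi).2
        (τn p) hττ
      have hAeq := nstate_count n L m f hL (hspec' (p+1) hi).1 (hspec' (p+1) hi).2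
        (τn p) (le_of_lt hττ)
      have h6 := hF6 p hi
      set sP : ℕ := ((Finset.range (τn p)).filter (fun r => f r = some (JJ (p+1)))).card
        with hsPdef
      have e1 : ∑ l ∈ Finset.range (p+1), ((n : ℤ)+1) * Sn l
          = ∑ l ∈ Finset.range (p+1), ((Mv l : ℤ) + n * τn l) :=
        Finset.sum_congr rfl (fun l hl => hcomp l (by
          have := Finset.mem_range.1 hl; omega))
      rw [← Finset.mul_sum] at e1
      rw [Finset.sum_add_distrib, ← Finset.mul_sum] at e1
      have e2 : ∑ l ∈ Finset.range (p+1), (τn l : ℤ)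
          = (∑ l ∈ Finset.range p, (τn l : ℤ)) + τn p := Finset.sum_range_succ _ _
      have e3 : ∑ l ∈ Finset.range p, (TT (l+1) : ℤ) ≤ ∑ l ∈ Finset.range p, (τn l : ℤ) :=
        Finset.sum_le_sum (fun l hl => hF7 l (by
          have := Finset.mem_range.1 hl; omega))
      have e4 := hToffsum p
      have e5 : (TT (p+1) : ℤ) ≤ τn p := hF7 p hp
      have h6' : ((∑ l ∈ Finset.range (p+1), Sn l : ℕ) : ℤ) + (sP : ℤ) ≤ (τn p : ℤ) := by
        exact_mod_cast h6
      push_cast at h6'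
      have hAlt : (nstate n L m f (τn p) (JJ (p+1)) : ℤ) < L := by exact_mod_cast halive.2
      have hn' : (1 : ℤ) ≤ n := by exact_mod_cast hn
      have hAeq2 : (nstate n L m f (τn p) (JJ (p+1)) : ℤ)
          = (Mv (p+1) : ℤ) + n * τn p - (n+1) * (sP : ℤ) := by
        rw [hMdef, hsPdef]
        simpa using hAeq
      have m2 : (n:ℤ) * (∑ l ∈ Finset.range p, (TT (l+1) : ℤ))
          ≤ (n:ℤ) * (∑ l ∈ Finset.range p, (τn l : ℤ)) :=
        mul_le_mul_of_nonneg_left e3 (by linarith)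
      have m3 : ((n:ℤ)-1) * (TT (p+1) : ℤ) ≤ ((n:ℤ)-1) * (τn p : ℤ) :=
        mul_le_mul_of_nonneg_left e5 (by linarith)
      have h6'' : ((n:ℤ)+1) * ((∑ l ∈ Finset.range (p+1), (Sn l : ℤ)) + (sP : ℤ))
          ≤ ((n:ℤ)+1) * (τn p : ℤ) :=
        mul_le_mul_of_nonneg_left h6' (by linarith)
      have goal' : (Mv (p+1) : ℤ) + n * TT (p+1) < L := by
        have hdistr : ((n:ℤ)+1) * ((∑ l ∈ Finset.range (p+1), (Sn l : ℤ)) + (sP : ℤ))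
            = ((n:ℤ)+1) * (∑ l ∈ Finset.range (p+1), (Sn l : ℤ))
              + ((n:ℤ)+1) * (sP : ℤ) := by ring
        have e4' : (TT (p+1) : ℤ) = (∑ l ∈ Finset.range (p+1), (Mv l : ℤ))
            + n * ∑ l ∈ Finset.range p, (TT (l+1) : ℤ) := hToffsum p
        have m4 : (n:ℤ) * (∑ l ∈ Finset.range (p+1), (τn l : ℤ))
            = n * (∑ l ∈ Finset.range p, (τn l : ℤ)) + n * τn p := by rw [e2]; ring
        linarith [hAeq2, hAlt, e1, m4, m2, m3, e4', h6'', hdistr]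
      exact_mod_cast goal'
  refine ⟨List.ofFn (fun i : Fin k => JJ i.val), ?_, by simp, ?_, ?_⟩
  · rw [List.nodup_ofFn]
    intro i i' he
    have := hJJinj i.val i.isLt i'.val i'.isLt he
    exact Fin.ext this
  · intro x hx
    rw [List.mem_ofFn] at hx
    obtain ⟨i, rfl⟩ := hx
    refine ⟨σ ⟨i.val, i.isLt⟩, ?_⟩
    have h1 := hJJ i.val i.isLt
    rw [hj'def] at h1
    simpa using h1
  · rw [List.map_ofFn]
    have : (m ∘ fun i : Fin k => JJ i.val) = fun i : Fin k => Mv i.val := by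
      funext i
      simp [hMdef]
    rw [this]
    exact feas_of_constraints n L k Mv 0 hF8

section Greedy

variable {ι : Type*} [DecidableEq ι] (n L : ℕ) (m : ι → ℕ) (f : ℕ → Option ι)

/-- An untargeted node that is alive at the end was alive at the start and
grew by exactly `n` per step. -/
lemma nstate_untarg_rev {t : ℕ} {p : ι} :
    ∀ s, (∀ r < s, f (t + r) ≠ some p) →
    0 < nstate n L m f (t + s) p → nstate n L m f (t + s) p < L →
    0 < nstate n L m f t p ∧ nstate n L m f t p < L ∧
      nstate n L m f (t + s) p = nstate n L m f t p + n * s := by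
  intro s
  induction s with
  | zero => intro _ h1 h2; exact ⟨h1, h2, by simp⟩
  | succ s ih =>
    intro hnt h1 h2
    rw [show t + (s+1) = (t+s) + 1 by ring, nstate_succ] at h1 h2
    by_cases hz : nstate n L m f (t+s) p = 0
    · simp [hz] at h1
    by_cases hLl : L ≤ nstate n L m f (t+s) p
    · rw [if_neg hz, if_pos hLl] at h2; omega
    rw [if_neg hz, if_neg hLl, if_neg (hnt s (by omega))] at h1 h2
    obtain ⟨g1, g2, g3⟩ := ih (fun r hr => hnt r (by omega)) (by omega) (by omega)
    refine ⟨g1, g2, ?_⟩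
    rw [show t + (s+1) = (t+s) + 1 by ring, nstate_succ,
      if_neg hz, if_neg hLl, if_neg (hnt s (by omega)), g3]
    ring

/-- An untargeted live node whose ideal growth stays below `L` grows exactly. -/
lemma nstate_untarg_fwd {t : ℕ} {p : ι} :
    ∀ s, (∀ r < s, f (t + r) ≠ some p) →
    0 < nstate n L m f t p → nstate n L m f t p + n * s < L →
    nstate n L m f (t + s) p = nstate n L m f t p + n * s := by
  intro s
  induction s with
  | zero => intro _ _ _; simp
  | succ s ih =>
    intro hnt h1 h2
    have hs := ih (fun r hr => hnt r (by omega)) h1 (by nlinarith)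
    rw [show t + (s+1) = (t+s) + 1 by ring, nstate_succ, hs]
    have hz : nstate n L m f t p + n * s ≠ 0 := by omega
    have hLl : ¬ L ≤ nstate n L m f t p + n * s := by nlinarith
    rw [if_neg hz, if_neg hLl, if_neg (hnt s (by omega))]
    ring

end Greedy

section Greedy2

variable {ι : Type*} [DecidableEq ι] (n L : ℕ) (m : ι → ℕ) (Uh : Finset ι) (f : ℕ → Option ι)

/-- If the greedy policy targets a live node `g` of minimal deficit at time `t`,
then it keeps targeting `g` until it is repaired, `nstate t g` steps later. -/
lemma nstate_serve (hn : 1 ≤ n)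
    (hgnat : ∀ t, (∃ x ∈ Uh, 0 < nstate n L m f t x ∧ nstate n L m f t x < L) →
      ∃ x ∈ Uh, f t = some x ∧ 0 < nstate n L m f t x ∧ nstate n L m f t x < L ∧
        ∀ x' ∈ Uh, 0 < nstate n L m f t x' → nstate n L m f t x' < L →
          nstate n L m f t x ≤ nstate n L m f t x')
    (t : ℕ) (g : ι) (hgU : g ∈ Uh) (htar : f t = some g)
    (halive : 0 < nstate n L m f t g ∧ nstate n L m f t g < L)
    (hmin : ∀ x' ∈ Uh, 0 < nstate n L m f t x' → nstate n L m f t x' < L →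
      nstate n L m f t g ≤ nstate n L m f t x') :
    ∀ s ≤ nstate n L m f t g,
      nstate n L m f (t + s) g = nstate n L m f t g - s ∧
        ∀ r < s, f (t + r) = some g := by
  intro s
  induction s with
  | zero => intro _; exact ⟨by simp, fun r hr => absurd hr (by omega)⟩
  | succ s ihs =>
    intro hs
    obtain ⟨hval, htars⟩ := ihs (by omega)
    have hgalive : 0 < nstate n L m f (t+s) g ∧ nstate n L m f (t+s) g < L := by
      constructor
      · omega
      · omega
    have htarts : f (t + s) = some g := by
      rcases Nat.eq_zero_or_pos s with rfl | hspos
      · simpa using htar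
      obtain ⟨p, hpU, hptar, hp1, hp2, hpmin⟩ :=
        hgnat (t+s) ⟨g, hgU, hgalive⟩
      by_cases hpg : p = g
      · rwa [hpg] at hptar
      have huntarg : ∀ r < s, f (t + r) ≠ some p := by
        intro r hr heq
        exact hpg (Option.some_injective _ ((heq.symm.trans (htars r hr))))
      obtain ⟨q1, q2, q3⟩ := nstate_untarg_rev n L m f s huntarg hp1 hp2
      have hle := hpmin g hgU hgalive.1 hgalive.2
      have hmg := hmin p hpU q1 q2
      have hns : 1 * s ≤ n * s := Nat.mul_le_mul_right s hn
      omega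
    constructor
    · rw [show t + (s+1) = (t+s) + 1 by ring, nstate_succ]
      have h0 : nstate n L m f (t+s) g ≠ 0 := by omega
      have hL' : ¬ L ≤ nstate n L m f (t+s) g := by omega
      rw [if_neg h0, if_neg hL', if_pos htarts]
      omega
    · intro r hr
      rcases Nat.lt_or_ge r s with h | h
      · exact htars r h
      · have : r = s := by omega
        rw [this]; exact htarts

lemma greedy_repairs (hn : 1 ≤ n)
    (hmemf : ∀ t x, f t = some x → x ∈ Uh)
    (hgnat : ∀ t, (∃ x ∈ Uh, 0 < nstate n L m f t x ∧ nstate n L m f t x < L) →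
      ∃ x ∈ Uh, f t = some x ∧ 0 < nstate n L m f t x ∧ nstate n L m f t x < L ∧
        ∀ x' ∈ Uh, 0 < nstate n L m f t x' → nstate n L m f t x' < L →
          nstate n L m f t x ≤ nstate n L m f t x') :
    ∀ (k t : ℕ) (l : List ι), l.Nodup → l.length = k →
      (∀ x ∈ l, x ∈ Uh ∧ 0 < nstate n L m f t x ∧ nstate n L m f t x < L) →
      feas n L 0 (l.map (nstate n L m f t)) →
      ∃ F : Finset ι, F.card = k ∧ ∀ x ∈ F, x ∈ Uh ∧ nstate n L m f t x ≠ 0 ∧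
        ∃ s, nstate n L m f s x = 0 := by
  intro k
  induction k with
  | zero => intro t l _ _ _ _; exact ⟨∅, by simp, by simp⟩
  | succ k ih =>
    intro t l hnd hlen hcond hfeas
    have hlne : l ≠ [] := by intro h; rw [h] at hlen; simp at hlen
    obtain ⟨x0, hx0⟩ := List.exists_mem_of_ne_nil l hlne
    have hx0c := hcond x0 hx0
    obtain ⟨g, hgU, hgtar, hg1, hg2, hgmin⟩ := hgnat t ⟨x0, hx0c.1, hx0c.2⟩
    -- build l' : the list l with g moved away from the head position
    obtain ⟨l', hnd', hglnot, hlen', hsub, hfeas'⟩ :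
        ∃ l' : List ι, l'.Nodup ∧ g ∉ l' ∧ l'.length = k ∧ (∀ x ∈ l', x ∈ l) ∧
          feas n L 0 (nstate n L m f t g :: l'.map (nstate n L m f t)) := by
      by_cases hgl : g ∈ l
      · obtain ⟨l₁, l₂, rfl⟩ := List.append_of_mem hgl
        have hmap : (l₁ ++ g :: l₂).map (nstate n L m f t)
            = l₁.map (nstate n L m f t) ++ nstate n L m f t g :: l₂.map (nstate n L m f t) := by
          simp
        rw [hmap] at hfeas
        have hmv := feas_move_front n L hn (l₁.map (nstate n L m f t))
          (nstate n L m f t g) (l₂.map (nstate n L m f t)) 0 ?_ hfeas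
        · refine ⟨l₁ ++ l₂, ?_, ?_, ?_, ?_, ?_⟩
          · rw [List.nodup_append] at hnd ⊢
            exact ⟨hnd.1, hnd.2.1.of_cons, fun a ha b hb => hnd.2.2 a ha b (List.mem_cons_of_mem _ hb)⟩
          · rw [List.nodup_append] at hnd
            intro hmem
            rcases List.mem_append.1 hmem with h | h
            · exact hnd.2.2 g h g List.mem_cons_self rfl
            · exact (List.nodup_cons.1 hnd.2.1).1 h
          · simp at hlen ⊢; omega
          · intro x hx
            rcases List.mem_append.1 hx with h | h
            · exact List.mem_append.2 (Or.inl h)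
            · exact List.mem_append.2 (Or.inr (List.mem_cons_of_mem _ h))
          · rw [List.map_append]
            exact hmv
        · intro y hy
          obtain ⟨x, hx, rfl⟩ := List.mem_map.1 hy
          have hxl : x ∈ l₁ ++ g :: l₂ := List.mem_append.2 (Or.inl hx)
          have hxc := hcond x hxl
          exact hgmin x hxc.1 hxc.2.1 hxc.2.2
      · match l, hlen with
        | x :: rest, hlen =>
          have hxc := hcond x List.mem_cons_self
          refine ⟨rest, (List.nodup_cons.1 hnd).2, fun h => hgl (List.mem_cons_of_mem _ h),
            by simpa using hlen, fun y hy => List.mem_cons_of_mem _ hy, ?_⟩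
          rw [List.map_cons] at hfeas
          exact feas_head_mono n L (hgmin x hxc.1 hxc.2.1 hxc.2.2) hfeas
    set c := nstate n L m f t g with hc
    have hfc : feas n L (0 + c) (l'.map (nstate n L m f t)) := by
      have := hfeas'.2
      simpa using this
    have hshift := feas_shift_iter n L c (l'.map (nstate n L m f t)) 0 hfc
    rw [List.map_map] at hshift
    have hserve := nstate_serve n L m Uh f hn hgnat t g hgU hgtar ⟨hg1, hg2⟩ hgmin
    obtain ⟨hgend, hgtars⟩ := hserve c le_rfl
    have hgzero : nstate n L m f (t + c) g = 0 := by rw [hgend]; omega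
    have hlt := feas_lt n L _ 0 hshift
    have hnew : ∀ x ∈ l', nstate n L m f (t + c) x = nstate n L m f t x + n * c := by
      intro x hx
      have hxc := hcond x (hsub x hx)
      have hxg : x ≠ g := fun h => hglnot (h ▸ hx)
      refine nstate_untarg_fwd n L m f c ?_ hxc.2.1 ?_
      · intro r hr heq
        exact hxg (Option.some_injective _ (heq.symm.trans (hgtars r hr)))
      · exact hlt _ (List.mem_map.2 ⟨x, hx, rfl⟩)
    have hcond' : ∀ x ∈ l', x ∈ Uh ∧ 0 < nstate n L m f (t+c) x ∧
        nstate n L m f (t+c) x < L := by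
      intro x hx
      have hxc := hcond x (hsub x hx)
      refine ⟨hxc.1, ?_, ?_⟩
      · rw [hnew x hx]; omega
      · rw [hnew x hx]; exact hlt _ (List.mem_map.2 ⟨x, hx, rfl⟩)
    have hfeas'' : feas n L 0 (l'.map (nstate n L m f (t+c))) := by
      have heq : l'.map (nstate n L m f (t+c))
          = l'.map ((· + n * c) ∘ nstate n L m f t) := by
        refine List.map_congr_left ?_
        intro x hx
        simpa using hnew x hx
      rw [heq]
      exact hshift
    obtain ⟨F, hFcard, hFprop⟩ := ih (t+c) l' hnd' hlen' hcond' hfeas''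
    refine ⟨insert g F, ?_, ?_⟩
    · rw [Finset.card_insert_of_notMem, hFcard]
      intro hgF
      exact (hFprop g hgF).2.1 hgzero
    · intro x hxF
      rcases Finset.mem_insert.1 hxF with rfl | hxF
      · exact ⟨hgU, by omega, t + c, hgzero⟩
      · obtain ⟨hU, hne, s, hs⟩ := hFprop x hxF
        refine ⟨hU, ?_, s, hs⟩
        intro h0
        exact hne (nstate_absorb0 n L m f h0 c)

end Greedy2

noncomputable def Hval (δ : ℝ) (L a : ℕ) : ℝ :=
  if a = 0 then 1 else if L ≤ a then 0 else 1 - a * δ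

lemma Hval_eq_one_iff {δ : ℝ} (hδ : 0 < δ) {L a : ℕ} (hL : 1 ≤ L) :
    Hval δ L a = 1 ↔ a = 0 := by
  unfold Hval
  split_ifs with h1 h2
  · simp [h1]
  · constructor
    · intro h; norm_num at h
    · intro h; exact absurd h h1
  · constructor
    · intro h
      have ha : 0 < (a : ℝ) := by
        have : a ≠ 0 := h1
        positivity
      nlinarith
    · intro h; exact absurd h h1

lemma Hval_alive_iff {δ : ℝ} (hδ : 0 < δ) {L a : ℕ}
    (hiff : ∀ b : ℕ, L ≤ b ↔ 1 ≤ (b:ℝ) * δ) :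
    (0 < Hval δ L a ∧ Hval δ L a < 1) ↔ (0 < a ∧ a < L) := by
  unfold Hval
  split_ifs with h1 h2
  · subst h1; constructor
    · rintro ⟨_, h⟩; norm_num at h
    · rintro ⟨h, _⟩; omega
  · constructor
    · rintro ⟨h, _⟩; norm_num at h
    · rintro ⟨_, h⟩; omega
  · have h2' : (a:ℝ) * δ < 1 := by
      by_contra hcon
      push_neg at hcon
      exact h2 ((hiff a).2 hcon)
    have h1' : 0 < (a:ℝ) := by
      have : a ≠ 0 := h1
      positivity
    constructor
    · intro _
      refine ⟨Nat.pos_of_ne_zero h1, by omega⟩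
    · intro _
      constructor
      · linarith
      · nlinarith

lemma health_eq_nstate {N M : ℕ} (v0 : Fin N → ℝ) (Δinc : Fin N → Fin M → ℝ)
    (Δdec : Fin N → ℝ) (u : ℕ → Fin M → Option (Fin N)) (h : Fin M)
    (hidle : ∀ t h', h' ≠ h → u t h' = none)
    (δ : ℝ) (hδ : 0 < δ) (hinc : ∀ j, Δinc j h = δ)
    (n : ℕ) (hn : 0 < n) (hdec : ∀ j, Δdec j = n * δ)
    (m : Fin N → ℕ) (hm : ∀ j, v0 j = 1 - m j * δ) (hm1 : ∀ j, 1 ≤ m j)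
    (hmL : ∀ j, m j < ⌈1/δ⌉₊) :
    ∀ t j, health v0 Δinc Δdec u t j
      = Hval δ (⌈1/δ⌉₊) (nstate n (⌈1/δ⌉₊) m (fun t => u t h) t j) := by
  set L : ℕ := ⌈1/δ⌉₊ with hLdef
  have hiff : ∀ b : ℕ, L ≤ b ↔ 1 ≤ (b:ℝ) * δ := by
    intro b
    rw [hLdef, Nat.ceil_le, div_le_iff₀ hδ]
  have hniff : ∀ b : ℕ, b < L ↔ (b:ℝ) * δ < 1 := by
    intro b
    constructor
    · intro hb
      by_contra hcon
      push_neg at hcon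
      have := (hiff b).2 hcon
      omega
    · intro hb
      by_contra hcon
      push_neg at hcon
      have := (hiff b).1 hcon
      linarith
  have hL1 : 1 ≤ L := by
    rw [hLdef]
    have : (0:ℝ) < 1/δ := by positivity
    exact Nat.one_le_iff_ne_zero.2 (by
      intro hcon
      have := Nat.ceil_eq_zero.1 hcon
      linarith)
  have hex : ∀ t j, (∃ h', u t h' = some j) → u t h = some j := by
    rintro t j ⟨h', hh'⟩
    by_cases e : h' = h
    · rwa [e] at hh'
    · rw [hidle t h' e] at hh'
      cases hh'
  have hchoose : ∀ t j (hx : ∃ h', u t h' = some j), Δinc j hx.choose = δ := by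
    intro t j hx
    have hsp := hx.choose_spec
    by_cases e : hx.choose = h
    · rw [e]; exact hinc j
    · rw [hidle t _ e] at hsp
      cases hsp
  intro t
  induction t with
  | zero =>
    intro j
    have h0 : m j ≠ 0 := by have := hm1 j; omega
    have hjL : ¬ L ≤ m j := by have := hmL j; omega
    rw [show health v0 Δinc Δdec u 0 j = v0 j from rfl, nstate_zero, Hval,
      if_neg h0, if_neg hjL, hm j]
  | succ t ih =>
    intro j
    have ihj := ih j
    set a := nstate n L m (fun t => u t h) t j with hadef
    have hunf : health v0 Δinc Δdec u (t+1) j =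
        (if health v0 Δinc Δdec u t j = 1 then 1
        else if health v0 Δinc Δdec u t j = 0 then 0
        else if hx : ∃ h', u t h' = some j
          then min 1 (health v0 Δinc Δdec u t j + Δinc j hx.choose)
          else max 0 (health v0 Δinc Δdec u t j - Δdec j)) := rfl
    rw [hunf, ihj, nstate_succ]
    by_cases ha0 : a = 0
    · rw [if_pos ha0]
      have : Hval δ L a = 1 := by rw [ha0]; simp [Hval]
      rw [this, if_pos rfl, Hval, if_pos rfl]
    by_cases haL : L ≤ a
    · rw [if_neg ha0, if_pos haL]
      have hv : Hval δ L a = 0 := by rw [Hval, if_neg ha0, if_pos haL]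
      rw [hv, if_neg (by norm_num), if_pos rfl]
    -- alive case
    have ha1 : 0 < (a:ℝ) := by positivity
    have haδ : (a:ℝ) * δ < 1 := (hniff a).1 (by omega)
    have hv : Hval δ L a = 1 - a * δ := by rw [Hval, if_neg ha0, if_neg haL]
    rw [if_neg ha0, if_neg haL, hv]
    have hv1 : (1 - (a:ℝ) * δ) ≠ 1 := by nlinarith
    have hv0 : (1 - (a:ℝ) * δ) ≠ 0 := by nlinarith
    rw [if_neg hv1, if_neg hv0]
    by_cases hu : u t h = some j
    · have hx : ∃ h', u t h' = some j := ⟨h, hu⟩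
      rw [dif_pos hx, hchoose t j hx, if_pos hu]
      have ha1' : 1 ≤ a := Nat.pos_of_ne_zero ha0
      have ha1r : (1:ℝ) ≤ (a:ℝ) := by exact_mod_cast ha1'
      have hmin : min 1 (1 - (a:ℝ) * δ + δ) = 1 - ((a:ℝ) - 1) * δ := by
        rw [min_eq_right]
        · ring
        · nlinarith [mul_nonneg (sub_nonneg.2 ha1r) hδ.le]
      rw [hmin, Hval]
      by_cases ha1'' : a - 1 = 0
      · rw [if_pos ha1'']
        have : a = 1 := by omega
        rw [this]
        push_cast
        ring
      · rw [if_neg ha1'', if_neg (by omega)]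
        have : ((a - 1 : ℕ) : ℝ) = (a:ℝ) - 1 := by
          push_cast [Nat.cast_sub ha1']
          ring
        rw [this]
    · have hnx : ¬ ∃ h', u t h' = some j := fun hx => hu (hex t j hx)
      rw [dif_neg hnx, if_neg hu, hdec j, Hval]
      have hne : a + n ≠ 0 := by omega
      rw [if_neg hne]
      by_cases hLan : L ≤ a + n
      · rw [if_pos hLan]
        have : 1 ≤ ((a+n : ℕ):ℝ) * δ := (hiff (a+n)).1 hLan
        push_cast at this
        rw [max_eq_left]
        nlinarith
      · rw [if_neg hLan]
        have : ((a+n : ℕ):ℝ) * δ < 1 := (hniff (a+n)).1 (by omega)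
        push_cast at this
        rw [max_eq_right]
        · push_cast; ring
        · nlinarith


/-- Lemma 5: under Assumption 2, the sequencing policy in which entity `h`
targets at each time-step a healthiest node among the nodes of its allocated
set `Uh` whose health is strictly between 0 and 1 maximizes the number of
permanently repaired nodes, over all sequencing policies of entity `h`. -/
theorem healthiest_node_optimal {N M : ℕ} (hN : 2 ≤ N) (hM : 1 ≤ M) (hMN : M ≤ N)
    (v0 : Fin N → ℝ) (Δinc : Fin N → Fin M → ℝ) (Δdec : Fin N → ℝ) (c : Fin M → NNReal)
    (hv0 : ∀ j, 0 < v0 j ∧ v0 j < 1) (hdec : ∀ j, 0 < Δdec j)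
    (hinc : ∀ j h, 0 < Δinc j h) (hA : Assumption2 v0 Δinc Δdec c)
    (Uh : Finset (Fin N)) (h : Fin M)
    (ug u : ℕ → Fin M → Option (Fin N))
    -- `ug` is the healthiest-node sequencing policy of entity `h`
    (hgidle : ∀ t h', h' ≠ h → ug t h' = none)
    (hgmem : ∀ t j, ug t h = some j → j ∈ Uh)
    (hgreedy : ∀ t,
      (∃ j ∈ Uh, 0 < health v0 Δinc Δdec ug t j ∧ health v0 Δinc Δdec ug t j < 1) →
      ∃ j ∈ Uh, ug t h = some j ∧
        0 < health v0 Δinc Δdec ug t j ∧ health v0 Δinc Δdec ug t j < 1 ∧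
        ∀ j' ∈ Uh, 0 < health v0 Δinc Δdec ug t j' ∧ health v0 Δinc Δdec ug t j' < 1 →
          health v0 Δinc Δdec ug t j' ≤ health v0 Δinc Δdec ug t j)
    -- `u` is an arbitrary sequencing policy of entity `h`
    (hidle : ∀ t h', h' ≠ h → u t h' = none)
    (hmem : ∀ t j, u t h = some j → j ∈ Uh) :
    Set.ncard {j | j ∈ Uh ∧ permRepaired v0 Δinc Δdec u j} ≤
      Set.ncard {j | j ∈ Uh ∧ permRepaired v0 Δinc Δdec ug j} := by
  classical
  obtain ⟨Δi, Δd, c', hΔinc, hΔdec, hΔle, hcc, hnn, hmm⟩ := hA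
  set δ := Δi h with hδdef
  have hδ : 0 < δ := by
    have := hinc ⟨0, by omega⟩ h
    rwa [hΔinc ⟨0, by omega⟩ h] at this
  obtain ⟨n, hn, hΔd⟩ := hnn h
  choose mm hmm0 hmmv using fun j => hmm j h
  have hm : ∀ j, v0 j = 1 - mm j * δ := fun j => by have := hmmv j; linarith
  have hm1 : ∀ j, 1 ≤ mm j := fun j => hmm0 j
  set L : ℕ := ⌈1/δ⌉₊ with hLdef
  have hmL : ∀ j, mm j < L := by
    intro j
    rw [hLdef, Nat.lt_ceil, lt_div_iff₀ hδ]
    have h1 : (mm j : ℝ) * δ = 1 - v0 j := (hmmv j).symm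
    have h2 := (hv0 j).1
    linarith
  have hL1 : 1 ≤ L := by
    rw [hLdef]
    have h0 : (0:ℝ) < 1/δ := by positivity
    exact Nat.one_le_iff_ne_zero.2 (fun hcon => by
      have := Nat.ceil_eq_zero.1 hcon; linarith)
  have hiffL : ∀ b : ℕ, L ≤ b ↔ 1 ≤ (b:ℝ) * δ := by
    intro b
    rw [hLdef, Nat.ceil_le, div_le_iff₀ hδ]
  have hdecs : ∀ j, Δdec j = n * δ := fun j => by rw [hΔdec j, hΔd]
  have hincs : ∀ j, Δinc j h = δ := fun j => hΔinc j h
  set fu : ℕ → Option (Fin N) := fun t => u t h with hfudef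
  set fg : ℕ → Option (Fin N) := fun t => ug t h with hfgdef
  have hB : ∀ t j, health v0 Δinc Δdec u t j = Hval δ L (nstate n L mm fu t j) :=
    health_eq_nstate v0 Δinc Δdec u h hidle δ hδ hincs n hn hdecs mm hm hm1 hmL
  have hBg : ∀ t j, health v0 Δinc Δdec ug t j = Hval δ L (nstate n L mm fg t j) :=
    health_eq_nstate v0 Δinc Δdec ug h hgidle δ hδ hincs n hn hdecs mm hm hm1 hmL
  have hpermu : ∀ j, permRepaired v0 Δinc Δdec u j ↔ ∃ t, nstate n L mm fu t j = 0 := by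
    intro j
    constructor
    · rintro ⟨t, ht⟩
      exact ⟨t, (Hval_eq_one_iff hδ hL1).1 (by rw [← hB t j]; exact ht)⟩
    · rintro ⟨t, ht⟩
      exact ⟨t, by rw [hB t j, ht]; simp [Hval]⟩
  have hpermg : ∀ j, permRepaired v0 Δinc Δdec ug j ↔ ∃ t, nstate n L mm fg t j = 0 := by
    intro j
    constructor
    · rintro ⟨t, ht⟩
      exact ⟨t, (Hval_eq_one_iff hδ hL1).1 (by rw [← hBg t j]; exact ht)⟩
    · rintro ⟨t, ht⟩
      exact ⟨t, by rw [hBg t j, ht]; simp [Hval]⟩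
  have halive_iff : ∀ t j, (0 < health v0 Δinc Δdec ug t j ∧ health v0 Δinc Δdec ug t j < 1)
      ↔ (0 < nstate n L mm fg t j ∧ nstate n L mm fg t j < L) := by
    intro t j
    rw [hBg t j]
    exact Hval_alive_iff hδ hiffL
  have hgnat : ∀ t, (∃ x ∈ Uh, 0 < nstate n L mm fg t x ∧ nstate n L mm fg t x < L) →
      ∃ x ∈ Uh, fg t = some x ∧ 0 < nstate n L mm fg t x ∧ nstate n L mm fg t x < L ∧
        ∀ x' ∈ Uh, 0 < nstate n L mm fg t x' → nstate n L mm fg t x' < L →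
          nstate n L mm fg t x ≤ nstate n L mm fg t x' := by
    rintro t ⟨x, hxU, hx⟩
    obtain ⟨jm, hjU, hjt, hj1, hj2, hjmax⟩ := hgreedy t ⟨x, hxU, (halive_iff t x).2 hx⟩
    have hj := (halive_iff t jm).1 ⟨hj1, hj2⟩
    refine ⟨jm, hjU, hjt, hj.1, hj.2, ?_⟩
    intro x' hx'U hx'1 hx'2
    have hle := hjmax x' hx'U ((halive_iff t x').2 ⟨hx'1, hx'2⟩)
    rw [hBg t x', hBg t jm] at hle
    have e1 : Hval δ L (nstate n L mm fg t jm) = 1 - (nstate n L mm fg t jm) * δ := by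
      rw [Hval, if_neg (by omega), if_neg (by omega)]
    have e2 : Hval δ L (nstate n L mm fg t x') = 1 - (nstate n L mm fg t x') * δ := by
      rw [Hval, if_neg (by omega), if_neg (by omega)]
    rw [e1, e2] at hle
    have hmul : (nstate n L mm fg t jm : ℝ) * δ ≤ (nstate n L mm fg t x' : ℝ) * δ := by
      linarith
    have : (nstate n L mm fg t jm : ℝ) ≤ (nstate n L mm fg t x' : ℝ) :=
      le_of_mul_le_mul_right hmul hδ
    exact_mod_cast this
  set S : Finset (Fin N) := Uh.filter (fun j => permRepaired v0 Δinc Δdec u j) with hSdef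
  set G : Finset (Fin N) := Uh.filter (fun j => permRepaired v0 Δinc Δdec ug j) with hGdef
  have hLHS : {j | j ∈ Uh ∧ permRepaired v0 Δinc Δdec u j} = ↑S := by
    ext j; simp [hSdef]
  have hRHS : {j | j ∈ Uh ∧ permRepaired v0 Δinc Δdec ug j} = ↑G := by
    ext j; simp [hGdef]
  rw [hLHS, hRHS, Set.ncard_coe_finset, Set.ncard_coe_finset]
  have e := S.orderIsoOfFin (rfl : S.card = S.card)
  obtain ⟨lst, hlnd, hllen, hlmem, hlfeas⟩ :=
    exists_feas_of_repairs n L hn hL1 mm fu S.card (fun i => (e i : Fin N))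
      (fun i i' hii => e.injective (Subtype.ext hii))
      (fun i => hm1 _) (fun i => hmL _)
      (fun i => (hpermu _).1 ((Finset.mem_filter.1 (e i).2).2))
  have hcnd : ∀ x ∈ lst, x ∈ Uh ∧ 0 < nstate n L mm fg 0 x ∧ nstate n L mm fg 0 x < L := by
    intro x hx
    obtain ⟨i, rfl⟩ := hlmem x hx
    have hxS := (e i).2
    exact ⟨(Finset.mem_filter.1 hxS).1, by rw [nstate_zero]; exact hm1 _,
      by rw [nstate_zero]; exact hmL _⟩
  have hfeas0 : feas n L 0 (lst.map (nstate n L mm fg 0)) := by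
    have heq : lst.map (nstate n L mm fg 0) = lst.map mm :=
      List.map_congr_left (fun x _ => nstate_zero n L mm fg x)
    rw [heq]
    exact hlfeas
  obtain ⟨F, hFcard, hFprop⟩ := greedy_repairs n L mm Uh fg hn
    (fun t x hx => hgmem t x hx) hgnat S.card 0 lst hlnd hllen hcnd hfeas0
  have hFG : F ⊆ G := by
    intro x hxF
    obtain ⟨hU, _, s, hs⟩ := hFprop x hxF
    exact Finset.mem_filter.2 ⟨hU, (hpermg x).2 ⟨s, hs⟩⟩
  calc S.card = F.card := hFcard.symm
  _ ≤ G.card := Finset.card_le_card hFG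
end

section
/- Suppose there are N ≥ 2 nodes, a single entity (M = 1), a budget β ∈ ℝ_{≥0} ∪ {∞}, and Assumption 2 holds. Then the online policy — where at each time-step the healthiest node that has not been targeted before is allocated to the entity whenever the entity is not currently repairing any node (provided the remaining budget covers its cost), the entity targets its allocated node at every step until it is permanently repaired, and this continues until there are no more nodes to allocate or the budget runs out — achieves the maximum possible reward among all budget-respecting policies. -/
open Classical ENNReal NNReal

def ValidPolicy {N M : ℕ} (U : Fin M → Finset (Fin N)) (u : ℕ → Fin M → Option (Fin N)) : Prop :=
  (∀ h h' : Fin M, h ≠ h' → Disjoint (U h) (U h')) ∧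
  ∀ (t : ℕ) (h : Fin M) (j : Fin N), u t h = some j → j ∈ U h


def WithinBudget {N M : ℕ} (c : Fin M → NNReal) (β : ℝ≥0∞) (U : Fin M → Finset (Fin N)) : Prop :=
  ∑ h : Fin M, (c h : ℝ≥0∞) * ((U h).card : ℝ≥0∞) ≤ β


noncomputable def allocStep {N M : ℕ} (c : Fin M → NNReal) (hl : Fin N → ℝ) :
    List (Fin M) → Finset (Fin N) × ℝ≥0∞ × (Fin M → Option (Fin N)) →
      Finset (Fin N) × ℝ≥0∞ × (Fin M → Option (Fin N))
  | [], st => st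
  | h :: rest, (A, γ, asg) =>
      if hc : (∀ j, asg h = some j → ¬(0 < hl j ∧ hl j < 1)) ∧
          (Finset.univ.filter fun j => j ∉ A ∧ 0 < hl j ∧ hl j < 1).Nonempty ∧
          (c h : ℝ≥0∞) ≤ γ then
        let j := ((Finset.univ.filter fun j => j ∉ A ∧ 0 < hl j ∧ hl j < 1).exists_max_image
          hl hc.2.1).choose
        allocStep c hl rest (insert j A, γ - (c h : ℝ≥0∞), Function.update asg h (some j))
      else allocStep c hl rest (A, γ, asg)


noncomputable def onlineState {N M : ℕ} (v0 : Fin N → ℝ) (Δinc : Fin N → Fin M → ℝ)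
    (Δdec : Fin N → ℝ) (c : Fin M → NNReal) (β : ℝ≥0∞) :
    ℕ → (Fin N → ℝ) × Finset (Fin N) × ℝ≥0∞ × (Fin M → Option (Fin N))
  | 0 => (v0, ∅, β, fun _ => none)
  | t + 1 =>
      let st := onlineState v0 Δinc Δdec c β t
      let hl := st.1
      let st' := allocStep c hl (List.finRange M) st.2
      let asg := st'.2.2
      (fun j =>
        let v := hl j
        if v = 1 then 1
        else if v = 0 then 0
        else if hx : ∃ h, asg h = some j then min 1 (v + Δinc j hx.choose)
        else max 0 (v - Δdec j),
       st')


namespace OPT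


/-- back-to-back feasibility of a list of repair-cost values (in `Δinc` units),
with accumulator `γ` = time already elapsed. -/
def Feas (δ : ℝ) (n : ℕ) : ℕ → List ℕ → Prop
  | _, [] => True
  | γ, a :: l => ((a : ℝ) * δ + (γ : ℝ) * ((n : ℝ) * δ) < 1) ∧ Feas δ n (a + (n+1)*γ) l

theorem feas_nil (δ : ℝ) (n γ : ℕ) : Feas δ n γ [] := trivial

theorem feas_cons {δ : ℝ} {n γ a : ℕ} {l : List ℕ} :
    Feas δ n γ (a :: l) ↔
      ((a : ℝ) * δ + (γ : ℝ) * ((n : ℝ) * δ) < 1) ∧ Feas δ n (a + (n+1)*γ) l := Iff.rfl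

theorem feas_mono {δ : ℝ} (hδ : 0 ≤ δ) {n : ℕ} :
    ∀ {l : List ℕ} {γ γ' : ℕ}, γ' ≤ γ → Feas δ n γ l → Feas δ n γ' l := by
  intro l
  induction l with
  | nil => intro _ _ _ _; trivial
  | cons a l ih =>
      intro γ γ' hle h
      rw [feas_cons] at h ⊢
      refine ⟨lt_of_le_of_lt ?_ h.1, ih (by nlinarith [Nat.add_le_add_left (Nat.mul_le_mul_left (n+1) hle) a]) h.2⟩
      have : (γ' : ℝ) ≤ (γ : ℝ) := by exact_mod_cast hle
      have hnd : 0 ≤ (n : ℝ) * δ := by positivity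
      nlinarith

theorem feas_swap {δ : ℝ} (hδ : 0 ≤ δ) {n : ℕ} (hn : 1 ≤ n) {γ x y : ℕ} {l : List ℕ}
    (hyx : y ≤ x) (h : Feas δ n γ (x :: y :: l)) : Feas δ n γ (y :: x :: l) := by
  rw [feas_cons, feas_cons] at h ⊢
  obtain ⟨h1, h2, h3⟩ := h
  have hyxR : (y : ℝ) ≤ (x : ℝ) := by exact_mod_cast hyx
  have hnR : (1 : ℝ) ≤ (n : ℝ) := by exact_mod_cast hn
  refine ⟨?_, ?_, feas_mono hδ ?_ h3⟩
  · nlinarith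
  · have hacc : ((y : ℝ) + ((n:ℝ)+1) * (x : ℝ)) = ((y + (n+1)*x : ℕ) : ℝ) := by push_cast; ring
    have h2' : (y : ℝ) * δ + ((x : ℝ) + ((n:ℝ)+1) * (γ : ℝ)) * ((n : ℝ) * δ) < 1 := by
      have : ((x + (n+1)*γ : ℕ) : ℝ) = (x : ℝ) + ((n:ℝ)+1) * (γ : ℝ) := by push_cast; ring
      rw [← this]; exact h2
    have key : 0 ≤ ((x:ℝ) - y) * (((n:ℝ) - 1) * δ) :=
      mul_nonneg (by linarith) (mul_nonneg (by linarith) hδ)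
    have goal' : (x : ℝ) * δ + ((y : ℝ) + ((n:ℝ)+1) * (γ : ℝ)) * ((n : ℝ) * δ) < 1 := by
      nlinarith
    have : ((y + (n+1)*γ : ℕ) : ℝ) = (y : ℝ) + ((n:ℝ)+1) * (γ : ℝ) := by push_cast; ring
    rw [this]; exact goal'
  · -- x + (n+1)*(y + (n+1)*γ) ≤ y + (n+1)*(x + (n+1)*γ)
    nlinarith [Nat.mul_le_mul_left n hyx]

theorem feas_orderedInsert {δ : ℝ} (hδ : 0 ≤ δ) {n : ℕ} (hn : 1 ≤ n) :
    ∀ {l : List ℕ} {γ a : ℕ}, Feas δ n γ (a :: l) →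
      Feas δ n γ (List.orderedInsert (· ≤ ·) a l) := by
  intro l
  induction l with
  | nil => intro γ a h; exact h
  | cons b l ih =>
      intro γ a h
      simp only [List.orderedInsert]
      by_cases hab : a ≤ b
      · simpa [hab] using h
      · have hba : b ≤ a := le_of_not_ge hab
        have h' : Feas δ n γ (b :: a :: l) := feas_swap hδ hn hba h
        rw [feas_cons] at h'
        simp only [hab, if_false]
        exact feas_cons.2 ⟨h'.1, ih h'.2⟩

theorem feas_insertionSort {δ : ℝ} (hδ : 0 ≤ δ) {n : ℕ} (hn : 1 ≤ n) :
    ∀ {l : List ℕ} {γ : ℕ}, Feas δ n γ l → Feas δ n γ (List.insertionSort (· ≤ ·) l) := by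
  intro l
  induction l with
  | nil => intro γ h; exact h
  | cons a l ih =>
      intro γ h
      rw [feas_cons] at h
      simp only [List.insertionSort]
      exact feas_orderedInsert hδ hn (feas_cons.2 ⟨h.1, ih h.2⟩)


section Adv
variable {N : ℕ} (v0 : Fin N → ℝ) (Δinc : Fin N → Fin 1 → ℝ) (Δdec : Fin N → ℝ)
  (u : ℕ → Fin 1 → Option (Fin N))

/-- number of times node `j` is targeted before time `t`. -/
def T (j : Fin N) (t : ℕ) : ℕ :=
  ((Finset.range t).filter (fun s => ∃ h : Fin 1, u s h = some j)).card

lemma T_zero (j : Fin N) : T u j 0 = 0 := by simp [T]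

lemma T_succ_targ {j : Fin N} {t : ℕ} (h : ∃ h : Fin 1, u t h = some j) :
    T u j (t+1) = T u j t + 1 := by
  simp [T, Finset.range_add_one, Finset.filter_insert, h, Fin.exists_fin_one.mp h]

lemma T_succ_untarg {j : Fin N} {t : ℕ} (h : ¬ ∃ h : Fin 1, u t h = some j) :
    T u j (t+1) = T u j t := by
  simp only [T, Finset.range_add_one, Finset.filter_insert]
  rw [if_neg h]

lemma T_mono {j : Fin N} {t1 t2 : ℕ} (h : t1 ≤ t2) : T u j t1 ≤ T u j t2 :=
  Finset.card_le_card (Finset.filter_subset_filter _ (Finset.range_subset_range.2 h))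

lemma target_unique {t : ℕ} {j j' : Fin N}
    (h : ∃ h : Fin 1, u t h = some j) (h' : ∃ h : Fin 1, u t h = some j') : j = j' := by
  obtain ⟨a, ha⟩ := h; obtain ⟨b, hb⟩ := h'
  have : a = b := Subsingleton.elim _ _
  rw [this, hb] at ha
  exact (Option.some_inj.1 ha).symm

lemma health_succ (t : ℕ) (j : Fin N) :
    health v0 Δinc Δdec u (t+1) j =
      (let v := health v0 Δinc Δdec u t j
       if v = 1 then 1
       else if v = 0 then 0
       else if hx : ∃ h, u t h = some j then min 1 (v + Δinc j hx.choose)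
       else max 0 (v - Δdec j)) := rfl

lemma health_bounds (hv : ∀ j, 0 ≤ v0 j ∧ v0 j ≤ 1) (hinc0 : ∀ j h, 0 ≤ Δinc j h)
    (hdec0 : ∀ j, 0 ≤ Δdec j) :
    ∀ t j, 0 ≤ health v0 Δinc Δdec u t j ∧ health v0 Δinc Δdec u t j ≤ 1 := by
  intro t
  induction t with
  | zero => exact hv
  | succ t ih =>
      intro j
      rw [health_succ]
      obtain ⟨h0, h1⟩ := ih j
      dsimp only
      split_ifs with e1 e2 hx
      · norm_num
      · norm_num
      · constructor
        · exact le_min (by norm_num) (by nlinarith [hinc0 j hx.choose])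
        · exact min_le_left _ _
      · constructor
        · exact le_max_left _ _
        · exact max_le (by norm_num) (by nlinarith [hdec0 j])

lemma health_zero_succ {t : ℕ} {j : Fin N} (h : health v0 Δinc Δdec u t j = 0) :
    health v0 Δinc Δdec u (t+1) j = 0 := by
  rw [health_succ]; simp [h]

lemma health_zero_of_le {t s : ℕ} {j : Fin N} (h : health v0 Δinc Δdec u t j = 0)
    (hts : t ≤ s) : health v0 Δinc Δdec u s j = 0 := by
  induction s, hts using Nat.le_induction with
  | base => exact h
  | succ s _ ih => exact health_zero_succ v0 Δinc Δdec u ih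

variable (δ : ℝ) (n : ℕ) (m : Fin N → ℕ)

/-- exact health formula for a node that gets permanently repaired at time `r`. -/
lemma adv_formula (hδ : 0 < δ) (hΔi : ∀ j h, Δinc j h = δ) (hΔd : ∀ j, Δdec j = (n:ℝ)*δ)
    (hv0 : ∀ j, 0 < v0 j ∧ v0 j < 1) (hm : ∀ j, 1 - v0 j = (m j : ℝ) * δ)
    (j : Fin N) (r : ℕ) (hr1 : health v0 Δinc Δdec u r j = 1)
    (hrmin : ∀ t < r, health v0 Δinc Δdec u t j ≠ 1) :
    ∀ t, t ≤ r → health v0 Δinc Δdec u t j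
      = v0 j + (T u j t : ℝ) * (((n:ℝ)+1) * δ) - (t:ℝ) * ((n:ℝ)*δ) := by
  have hv : ∀ j, 0 ≤ v0 j ∧ v0 j ≤ 1 := fun j => ⟨(hv0 j).1.le, (hv0 j).2.le⟩
  have hinc0 : ∀ j h, 0 ≤ Δinc j h := fun j h => by rw [hΔi]; exact hδ.le
  have hdec0 : ∀ j, 0 ≤ Δdec j := fun j => by rw [hΔd]; positivity
  intro t
  induction t with
  | zero => intro _; simp [health, T_zero]
  | succ t ih =>
      intro htr
      have htr' : t < r := htr
      have IH := ih (le_of_lt htr')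
      set v := health v0 Δinc Δdec u t j with hvdef
      have hb := health_bounds v0 Δinc Δdec u hv hinc0 hdec0 t j
      have hne1 : v ≠ 1 := hrmin t htr'
      have hne0 : v ≠ 0 := by
        intro h0
        have := health_zero_of_le v0 Δinc Δdec u h0 (le_of_lt htr')
        rw [hr1] at this; norm_num at this
      have hvlt1 : v < 1 := lt_of_le_of_ne hb.2 hne1
      have hvpos : 0 < v := lt_of_le_of_ne hb.1 (Ne.symm hne0)
      -- grid: 1 - v = z * δ with z ≥ 1
      have hz : (1 : ℝ) - v = ((m j : ℝ) + (t:ℝ)*(n:ℝ) - ((n:ℝ)+1)*(T u j t : ℝ)) * δ := by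
        rw [IH]
        have := hm j
        nlinarith [hm j]
      have hzpos : (0:ℝ) < ((m j : ℝ) + (t:ℝ)*(n:ℝ) - ((n:ℝ)+1)*(T u j t : ℝ)) := by
        by_contra hcon
        push_neg at hcon
        nlinarith
      have hzint : ∃ z : ℤ, ((m j : ℝ) + (t:ℝ)*(n:ℝ) - ((n:ℝ)+1)*(T u j t : ℝ)) = (z:ℝ) := by
        refine ⟨(m j : ℤ) + (t:ℤ)*(n:ℤ) - ((n:ℤ)+1)*(T u j t : ℤ), ?_⟩
        push_cast; ring
      have hz1 : (1:ℝ) ≤ ((m j : ℝ) + (t:ℝ)*(n:ℝ) - ((n:ℝ)+1)*(T u j t : ℝ)) := by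
        obtain ⟨z, hzeq⟩ := hzint
        rw [hzeq] at hzpos ⊢
        have : (0:ℤ) < z := by exact_mod_cast hzpos
        exact_mod_cast this
      have hgap : v + δ ≤ 1 := by nlinarith
      rw [health_succ]
      dsimp only
      rw [← hvdef, if_neg hne1, if_neg hne0]
      by_cases hx : ∃ h : Fin 1, u t h = some j
      · rw [dif_pos hx, hΔi, min_eq_right (by linarith), T_succ_targ u hx, IH]
        push_cast; ring
      · rw [dif_neg hx, hΔd]
        have hnonneg : 0 ≤ v - (n:ℝ)*δ := by
          by_contra hcon
          push_neg at hcon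
          have h0 : health v0 Δinc Δdec u (t+1) j = 0 := by
            rw [health_succ]; dsimp only
            rw [← hvdef, if_neg hne1, if_neg hne0, dif_neg hx, hΔd]
            exact max_eq_left (by linarith)
          have := health_zero_of_le v0 Δinc Δdec u h0 htr
          rw [hr1] at this; norm_num at this
        rw [max_eq_right hnonneg, T_succ_untarg u hx, IH]
        push_cast; ring

lemma adv_pos (hδ : 0 < δ) (hΔi : ∀ j h, Δinc j h = δ) (hΔd : ∀ j, Δdec j = (n:ℝ)*δ)
    (hv0 : ∀ j, 0 < v0 j ∧ v0 j < 1)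
    (j : Fin N) (r : ℕ) (hr1 : health v0 Δinc Δdec u r j = 1)
    (hrmin : ∀ t < r, health v0 Δinc Δdec u t j ≠ 1) :
    ∀ t < r, 0 < health v0 Δinc Δdec u t j := by
  intro t htr
  have hv : ∀ j, 0 ≤ v0 j ∧ v0 j ≤ 1 := fun j => ⟨(hv0 j).1.le, (hv0 j).2.le⟩
  have hinc0 : ∀ j h, 0 ≤ Δinc j h := fun j h => by rw [hΔi]; exact hδ.le
  have hdec0 : ∀ j, 0 ≤ Δdec j := fun j => by rw [hΔd]; positivity
  have hb := health_bounds v0 Δinc Δdec u hv hinc0 hdec0 t j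
  rcases lt_or_eq_of_le hb.1 with h | h
  · exact h
  · exfalso
    have := health_zero_of_le v0 Δinc Δdec u h.symm (le_of_lt htr)
    rw [hr1] at this; norm_num at this

lemma adv_complete (hδ : 0 < δ) (hΔi : ∀ j h, Δinc j h = δ) (hΔd : ∀ j, Δdec j = (n:ℝ)*δ)
    (hv0 : ∀ j, 0 < v0 j ∧ v0 j < 1) (hm : ∀ j, 1 - v0 j = (m j : ℝ) * δ)
    (j : Fin N) (r : ℕ) (hr1 : health v0 Δinc Δdec u r j = 1)
    (hrmin : ∀ t < r, health v0 Δinc Δdec u t j ≠ 1) :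
    (n+1) * T u j r = m j + n * r := by
  have hf := adv_formula v0 Δinc Δdec u δ n m hδ hΔi hΔd hv0 hm j r hr1 hrmin r le_rfl
  rw [hr1] at hf
  have hmj := hm j
  have hδ' : δ ≠ 0 := ne_of_gt hδ
  have key : (((n:ℝ)+1) * (T u j r : ℝ)) * δ = ((m j : ℝ) + (n:ℝ)*(r:ℝ)) * δ := by
    nlinarith [hf, hmj]
  have key2 := mul_right_cancel₀ hδ' key
  have hreal : (((n+1) * T u j r : ℕ) : ℝ) = ((m j + n * r : ℕ) : ℝ) := by
    push_cast
    linarith [key2]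
  exact_mod_cast hreal

lemma adv_targeted_last (hδ : 0 < δ) (hΔi : ∀ j h, Δinc j h = δ) (hΔd : ∀ j, Δdec j = (n:ℝ)*δ)
    (hv0 : ∀ j, 0 < v0 j ∧ v0 j < 1)
    (hn : 1 ≤ n)
    (j : Fin N) (r : ℕ) (hr0 : 0 < r) (hr1 : health v0 Δinc Δdec u r j = 1)
    (hrmin : ∀ t < r, health v0 Δinc Δdec u t j ≠ 1) :
    ∃ h : Fin 1, u (r-1) h = some j := by
  have hv : ∀ j, 0 ≤ v0 j ∧ v0 j ≤ 1 := fun j => ⟨(hv0 j).1.le, (hv0 j).2.le⟩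
  have hinc0 : ∀ j h, 0 ≤ Δinc j h := fun j h => by rw [hΔi]; exact hδ.le
  have hdec0 : ∀ j, 0 ≤ Δdec j := fun j => by rw [hΔd]; positivity
  obtain ⟨t, rfl⟩ : ∃ t, r = t + 1 := ⟨r - 1, (Nat.succ_pred_eq_of_pos hr0).symm⟩
  show ∃ h : Fin 1, u t h = some j
  have hb := health_bounds v0 Δinc Δdec u hv hinc0 hdec0 t j
  set v := health v0 Δinc Δdec u t j with hvdef
  have hne1 : v ≠ 1 := hrmin t (Nat.lt_succ_self t)
  have hne0 : v ≠ 0 := by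
    intro h0
    have := health_zero_of_le v0 Δinc Δdec u h0 (Nat.le_succ t)
    rw [hr1] at this; norm_num at this
  by_contra hx
  rw [health_succ] at hr1
  dsimp only at hr1
  rw [← hvdef, if_neg hne1, if_neg hne0, dif_neg hx, hΔd] at hr1
  have hn0 : (0:ℝ) ≤ (n:ℝ)*δ := by positivity
  rcases max_cases (0:ℝ) (v - (n:ℝ)*δ) with ⟨h1, _⟩ | ⟨h1, _⟩ <;> rw [h1] at hr1
  · norm_num at hr1
  · have hn' : (1:ℝ) ≤ (n:ℝ) := by exact_mod_cast hn
    nlinarith [hb.2]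

lemma T_window (S : Finset (Fin N)) (t1 t2 : ℕ) (h12 : t1 ≤ t2) :
    (∑ j ∈ S, T u j t2) + t1 ≤ t2 + ∑ j ∈ S, T u j t1 := by
  classical
  set F : Fin N → Finset ℕ :=
    fun j => (Finset.Ico t1 t2).filter (fun s => ∃ h : Fin 1, u s h = some j) with hF
  have hsplit : ∀ j, T u j t2 = T u j t1 + (F j).card := by
    intro j
    have hd : Disjoint ((Finset.range t1).filter (fun s => ∃ h : Fin 1, u s h = some j)) (F j) := by
      refine Disjoint.mono (Finset.filter_subset _ _) (Finset.filter_subset _ _) ?_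
      rw [Finset.range_eq_Ico]
      exact Finset.Ico_disjoint_Ico_consecutive 0 t1 t2
    have hunion : ((Finset.range t1).filter (fun s => ∃ h : Fin 1, u s h = some j)) ∪ F j
        = (Finset.range t2).filter (fun s => ∃ h : Fin 1, u s h = some j) := by
      rw [hF]
      rw [← Finset.filter_union]
      congr 1
      simp only [Finset.range_eq_Ico]
      exact Finset.Ico_union_Ico_eq_Ico (Nat.zero_le t1) h12
    have := Finset.card_union_of_disjoint hd
    rw [hunion] at this
    simp only [T, this]
  have hdisj : ∀ a ∈ S, ∀ b ∈ S, a ≠ b → Disjoint (F a) (F b) := by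
    intro a _ b _ hab
    rw [Finset.disjoint_left]
    intro s hsa hsb
    rw [hF, Finset.mem_filter] at hsa hsb
    exact hab (target_unique u hsa.2 hsb.2)
  have hsum : ∑ j ∈ S, (F j).card ≤ t2 - t1 := by
    rw [← Finset.card_biUnion hdisj]
    calc (S.biUnion F).card ≤ (Finset.Ico t1 t2).card := by
          apply Finset.card_le_card
          intro s hs
          rw [Finset.mem_biUnion] at hs
          obtain ⟨j, _, hj⟩ := hs
          exact Finset.mem_of_mem_filter s hj
      _ = t2 - t1 := Nat.card_Ico t1 t2
  have : ∑ j ∈ S, T u j t2 = (∑ j ∈ S, T u j t1) + ∑ j ∈ S, (F j).card := by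
    rw [← Finset.sum_add_distrib]
    exact Finset.sum_congr rfl (fun j _ => hsplit j)
  omega

lemma adv_main (hδ : 0 < δ) (hn : 1 ≤ n) (hΔi : ∀ j h, Δinc j h = δ)
    (hΔd : ∀ j, Δdec j = (n:ℝ)*δ)
    (hv0 : ∀ j, 0 < v0 j ∧ v0 j < 1) (hm : ∀ j, 1 - v0 j = (m j : ℝ) * δ)
    (r : Fin N → ℕ) :
    ∀ (Q : List (Fin N)) (t0 R0 : ℕ),
    Q.Nodup →
    (∀ j ∈ Q, health v0 Δinc Δdec u (r j) j = 1 ∧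
      (∀ t < r j, health v0 Δinc Δdec u t j ≠ 1) ∧ t0 < r j) →
    Q.Pairwise (fun a b => r a < r b) →
    n * R0 + (n+1) * (∑ j ∈ Q.toFinset, T u j t0) ≤ n * t0 →
    Feas δ n R0 (Q.map m) := by
  intro Q
  induction Q with
  | nil => intro t0 R0 _ _ _ _; exact trivial
  | cons j Q2 ih =>
      intro t0 R0 hnd hyp hpw hG
      obtain ⟨hr1, hrmin, ht0⟩ := hyp j (List.mem_cons_self)
      have hjnot : j ∉ Q2.toFinset := by
        rw [List.mem_toFinset]; exact (List.nodup_cons.1 hnd).1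
      have hsum_split : ∑ l ∈ (j :: Q2).toFinset, T u l t0
          = T u j t0 + ∑ l ∈ Q2.toFinset, T u l t0 := by
        rw [List.toFinset_cons, Finset.sum_insert hjnot]
      rw [hsum_split] at hG
      set Tj0 := T u j t0
      set SQ0 := ∑ l ∈ Q2.toFinset, T u l t0 with hSQ0
      set Tj1 := T u j (r j) with hTj1
      set SQ1 := ∑ l ∈ Q2.toFinset, T u l (r j) with hSQ1
      have hfor := adv_formula v0 Δinc Δdec u δ n m hδ hΔi hΔd hv0 hm j (r j) hr1 hrmin t0 ht0.le
      have hpos := adv_pos v0 Δinc Δdec u δ n hδ hΔi hΔd hv0 j (r j) hr1 hrmin t0 ht0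
      rw [hfor] at hpos
      have h1R : (n:ℝ)*R0 + ((n:ℝ)+1)*((Tj0:ℝ) + (SQ0:ℝ)) ≤ (n:ℝ)*(t0:ℝ) := by
        exact_mod_cast hG
      have hδ0 : (0:ℝ) ≤ δ := hδ.le
      -- first Feas constraint
      have hcon : ((m j : ℝ)) * δ + (R0:ℝ) * ((n:ℝ)*δ) < 1 := by
        have hmj := hm j
        nlinarith [mul_le_mul_of_nonneg_right h1R hδ0, hpos,
          mul_nonneg (mul_nonneg (by positivity : (0:ℝ) ≤ (n:ℝ)+1) (Nat.cast_nonneg SQ0)) hδ0]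
      -- the new invariant at time r j
      have h2 := adv_complete v0 Δinc Δdec u δ n m hδ hΔi hΔd hv0 hm j (r j) hr1 hrmin
      have h3 : Tj1 + SQ1 + t0 ≤ r j + Tj0 + SQ0 := by
        have := T_window u (insert j Q2.toFinset) t0 (r j) ht0.le
        rw [Finset.sum_insert hjnot, Finset.sum_insert hjnot] at this
        omega
      have hG' : n * (m j + (n+1)*R0) + (n+1) * SQ1 ≤ n * r j := by
        have h3n : (n:ℝ)*((Tj1:ℝ) + (SQ1:ℝ) + (t0:ℝ)) ≤ (n:ℝ)*((r j:ℝ) + (Tj0:ℝ) + (SQ0:ℝ)) := by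
          apply mul_le_mul_of_nonneg_left _ (by positivity : (0:ℝ) ≤ (n:ℝ))
          exact_mod_cast h3
        have hnS : (0:ℝ) ≤ ((n:ℝ)-1)*(SQ1:ℝ) := by
          apply mul_nonneg _ (by positivity : (0:ℝ) ≤ (SQ1:ℝ))
          have : (1:ℝ) ≤ (n:ℝ) := by exact_mod_cast hn
          linarith
        have key : (n:ℝ)*(Tj1:ℝ) + (n:ℝ)*(R0:ℝ) + (SQ1:ℝ) ≤ (n:ℝ)*(r j:ℝ) := by
          linarith [h3n, h1R, hnS, (by positivity : (0:ℝ) ≤ (Tj0:ℝ)), (by positivity : (0:ℝ) ≤ (SQ0:ℝ))]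
        have key2 : ((n:ℝ)+1)*((n:ℝ)*(Tj1:ℝ) + (n:ℝ)*(R0:ℝ) + (SQ1:ℝ))
            ≤ ((n:ℝ)+1)*((n:ℝ)*(r j:ℝ)) :=
          mul_le_mul_of_nonneg_left key (by positivity)
        have h2R : ((n:ℝ)+1)*(Tj1:ℝ) = (m j : ℝ) + (n:ℝ)*(r j:ℝ) := by
          exact_mod_cast h2
        have h2n : (n:ℝ)*(((n:ℝ)+1)*(Tj1:ℝ)) = (n:ℝ)*((m j : ℝ) + (n:ℝ)*(r j:ℝ)) := by
          rw [h2R]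
        have goalR : (n:ℝ)*((m j:ℝ) + ((n:ℝ)+1)*(R0:ℝ)) + ((n:ℝ)+1)*(SQ1:ℝ) ≤ (n:ℝ)*(r j:ℝ) := by
          nlinarith [key2, h2n]
        exact_mod_cast goalR
      rw [List.map_cons, feas_cons]
      refine ⟨hcon, ?_⟩
      apply ih (r j) (m j + (n+1)*R0) (List.nodup_cons.1 hnd).2 ?_ (List.pairwise_cons.1 hpw).2 hG'
      intro b hb
      obtain ⟨hb1, hb2, _⟩ := hyp b (List.mem_cons_of_mem j hb)
      exact ⟨hb1, hb2, (List.pairwise_cons.1 hpw).1 b hb⟩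

end Adv

end OPT

namespace OPT

def QgF (n : ℕ) (s : List ℕ) (γ : ℕ) : ℕ → ℕ
  | 0 => γ
  | q+1 => s.getD q 0 + (n+1) * QgF n s γ q

lemma QgF_succ (n : ℕ) (s : List ℕ) (γ q : ℕ) :
    QgF n s γ (q+1) = s.getD q 0 + (n+1) * QgF n s γ q := rfl

lemma QgF_le_succ (n : ℕ) (s : List ℕ) (γ q : ℕ) : QgF n s γ q ≤ QgF n s γ (q+1) := by
  rw [QgF_succ]
  nlinarith [Nat.zero_le (s.getD q 0), Nat.zero_le (QgF n s γ q)]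

lemma QgF_mono (n : ℕ) (s : List ℕ) (γ : ℕ) {q q' : ℕ} (h : q ≤ q') :
    QgF n s γ q ≤ QgF n s γ q' := by
  induction q', h using Nat.le_induction with
  | base => exact le_refl _
  | succ q' hq ih => exact le_trans ih (QgF_le_succ n s γ q')

lemma QgF_shift (n : ℕ) (a : ℕ) (l : List ℕ) (γ : ℕ) :
    ∀ q, QgF n (a :: l) γ (q+1) = QgF n l (a + (n+1)*γ) q := by
  intro q
  induction q with
  | zero => simp [QgF]
  | succ q ih => rw [QgF_succ, ih, QgF_succ]; simp

lemma feas_index {δ : ℝ} {n : ℕ} :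
    ∀ {l : List ℕ} {γ : ℕ}, Feas δ n γ l → ∀ q, q < l.length →
      (l.getD q 0 : ℝ) * δ + (QgF n l γ q : ℝ) * ((n:ℝ)*δ) < 1 := by
  intro l
  induction l with
  | nil => intro γ _ q hq; simp at hq
  | cons a l ih =>
      intro γ hf q hq
      rw [feas_cons] at hf
      cases q with
      | zero => simpa [QgF] using hf.1
      | succ q =>
          rw [QgF_shift, List.getD_cons_succ]
          exact ih hf.2 q (by simpa using hq)

lemma sorted_countP (s : List ℕ) (hs : s.Pairwise (· ≤ ·)) :
    ∀ q, q < s.length → q + 1 ≤ s.countP (fun x => decide (x ≤ s.getD q 0)) := by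
  induction s with
  | nil => intro q hq; simp at hq
  | cons a tl ih =>
      intro q hq
      cases q with
      | zero =>
          rw [List.countP_cons]
          simp
      | succ q =>
          have hq' : q < tl.length := by simpa using hq
          have hv : (a :: tl).getD (q+1) 0 = tl.getD q 0 := List.getD_cons_succ ..
          rw [hv, List.countP_cons]
          have hmem : tl.getD q 0 ∈ tl := by
            rw [List.getD_eq_getElem _ _ hq']
            exact List.getElem_mem _
          have hale : a ≤ tl.getD q 0 := (List.pairwise_cons.1 hs).1 _ hmem
          have hrec := ih (List.pairwise_cons.1 hs).2 q hq'
          have hd : (decide (a ≤ tl.getD q 0)) = true := decide_eq_true hale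
          rw [hd]
          simp only [if_pos]
          omega

end OPT

namespace OPT
section Greedy
variable {N : ℕ} (v0 : Fin N → ℝ) (Δinc : Fin N → Fin 1 → ℝ) (Δdec : Fin N → ℝ)
  (c : Fin 1 → NNReal) (β : ℝ≥0∞)

local notation "GS" => onlineState v0 Δinc Δdec c β

/-- the chosen (healthiest candidate) node. -/
noncomputable def pick (hl : Fin N → ℝ) (A : Finset (Fin N))
    (hne : (Finset.univ.filter fun j => j ∉ A ∧ 0 < hl j ∧ hl j < 1).Nonempty) : Fin N :=
  ((Finset.univ.filter fun j => j ∉ A ∧ 0 < hl j ∧ hl j < 1).exists_max_image hl hne).choose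

lemma pick_spec (hl : Fin N → ℝ) (A : Finset (Fin N))
    (hne : (Finset.univ.filter fun j => j ∉ A ∧ 0 < hl j ∧ hl j < 1).Nonempty) :
    (pick hl A hne ∉ A ∧ 0 < hl (pick hl A hne) ∧ hl (pick hl A hne) < 1) ∧
      ∀ x, x ∉ A → 0 < hl x → hl x < 1 → hl x ≤ hl (pick hl A hne) := by
  obtain ⟨h1, h2⟩ := ((Finset.univ.filter fun j => j ∉ A ∧ 0 < hl j ∧ hl j < 1).exists_max_image
    hl hne).choose_spec
  rw [Finset.mem_filter] at h1
  refine ⟨h1.2, fun x hx1 hx2 hx3 => h2 x ?_⟩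
  rw [Finset.mem_filter]
  exact ⟨Finset.mem_univ x, hx1, hx2, hx3⟩

def Cond (t : ℕ) : Prop :=
  (∀ j, (GS t).2.2.2 0 = some j → ¬(0 < (GS t).1 j ∧ (GS t).1 j < 1)) ∧
  (Finset.univ.filter fun j => j ∉ (GS t).2.1 ∧ 0 < (GS t).1 j ∧ (GS t).1 j < 1).Nonempty ∧
  ((c 0 : ℝ≥0∞) ≤ (GS t).2.2.1)

lemma state_succ_snd (t : ℕ) :
    (GS (t+1)).2 = allocStep c (GS t).1 (List.finRange 1) (GS t).2 := rfl

lemma state_succ_fst (t : ℕ) (j : Fin N) :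
    (GS (t+1)).1 j =
      (let v := (GS t).1 j
       if v = 1 then 1
       else if v = 0 then 0
       else if hx : ∃ h, (GS (t+1)).2.2.2 h = some j then min 1 (v + Δinc j hx.choose)
       else max 0 (v - Δdec j)) := rfl

lemma step_pos (t : ℕ) (hc : Cond v0 Δinc Δdec c β t) :
    (GS (t+1)).2 = (insert (pick (GS t).1 (GS t).2.1 hc.2.1) (GS t).2.1,
      (GS t).2.2.1 - (c 0 : ℝ≥0∞),
      Function.update ((GS t).2.2.2) 0 (some (pick (GS t).1 (GS t).2.1 hc.2.1))) := by
  rw [state_succ_snd]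
  have hfin : List.finRange 1 = [(0 : Fin 1)] := rfl
  rw [hfin]
  show allocStep c (GS t).1 [(0 : Fin 1)] ((GS t).2.1, (GS t).2.2.1, (GS t).2.2.2) = _
  have hc' := hc
  unfold Cond at hc'
  rw [allocStep, dif_pos hc']
  rfl

lemma step_neg (t : ℕ) (hc : ¬ Cond v0 Δinc Δdec c β t) :
    (GS (t+1)).2 = (GS t).2 := by
  rw [state_succ_snd]
  have hfin : List.finRange 1 = [(0 : Fin 1)] := rfl
  rw [hfin]
  show allocStep c (GS t).1 [(0 : Fin 1)] ((GS t).2.1, (GS t).2.2.1, (GS t).2.2.2) = _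
  have hc' := hc
  unfold Cond at hc'
  rw [allocStep, dif_neg hc']
  rfl

lemma GA_mono (t : ℕ) : (GS t).2.1 ⊆ (GS (t+1)).2.1 := by
  by_cases hc : Cond v0 Δinc Δdec c β t
  · rw [step_pos v0 Δinc Δdec c β t hc]
    exact Finset.subset_insert _ _
  · rw [step_neg v0 Δinc Δdec c β t hc]

lemma GA_mono_le {t t' : ℕ} (h : t ≤ t') : (GS t).2.1 ⊆ (GS t').2.1 := by
  induction t', h using Nat.le_induction with
  | base => exact subset_refl _
  | succ t' h ih => exact subset_trans ih (GA_mono v0 Δinc Δdec c β t')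

lemma asg_mem : ∀ t j, (GS t).2.2.2 0 = some j → j ∈ (GS t).2.1 := by
  intro t
  induction t with
  | zero => intro j h; exact absurd h (by simp [onlineState])
  | succ t ih =>
      intro j h
      by_cases hc : Cond v0 Δinc Δdec c β t
      · rw [step_pos v0 Δinc Δdec c β t hc] at h ⊢
        simp only [Function.update_self] at h
        exact Finset.mem_insert.2 (Or.inl (Option.some_inj.1 h).symm)
      · rw [step_neg v0 Δinc Δdec c β t hc] at h ⊢
        exact ih j h
end Greedy
end OPT

namespace OPT
section Greedy2
variable {N : ℕ} (v0 : Fin N → ℝ) (Δinc : Fin N → Fin 1 → ℝ) (Δdec : Fin N → ℝ)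
  (c : Fin 1 → NNReal) (β : ℝ≥0∞) (δ : ℝ) (n : ℕ) (m : Fin N → ℕ)

local notation "GS" => onlineState v0 Δinc Δdec c β

lemma Gγ_eq : ∀ t, (GS t).2.2.1 = β - (c 0 : ℝ≥0∞) * ((GS t).2.1.card : ℝ≥0∞) := by
  intro t
  induction t with
  | zero => simp [onlineState]
  | succ t ih =>
      by_cases hc : Cond v0 Δinc Δdec c β t
      · rw [step_pos v0 Δinc Δdec c β t hc]
        have hnot := (pick_spec (GS t).1 (GS t).2.1 hc.2.1).1.1
        show (GS t).2.2.1 - (c 0 : ℝ≥0∞) = β - (c 0 : ℝ≥0∞) *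
          (((insert (pick (GS t).1 (GS t).2.1 hc.2.1) (GS t).2.1).card : ℕ) : ℝ≥0∞)
        rw [Finset.card_insert_of_notMem hnot, ih, tsub_tsub]
        congr 1
        push_cast
        ring
      · rw [step_neg v0 Δinc Δdec c β t hc]
        exact ih

lemma grid_all (hδ : 0 < δ) (hΔi : ∀ j h, Δinc j h = δ) (hΔd : ∀ j, Δdec j = (n:ℝ)*δ)
    (hv0 : ∀ j, 0 < v0 j ∧ v0 j < 1) (hm : ∀ j, 1 - v0 j = (m j : ℝ) * δ) :
    ∀ t j, (0 ≤ (GS t).1 j ∧ (GS t).1 j ≤ 1) ∧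
      ((GS t).1 j = 0 ∨ ∃ z : ℕ, (GS t).1 j = 1 - (z:ℝ)*δ) := by
  intro t
  induction t with
  | zero =>
      intro j
      refine ⟨⟨(hv0 j).1.le, (hv0 j).2.le⟩, Or.inr ⟨m j, ?_⟩⟩
      have := hm j
      show v0 j = 1 - (m j : ℝ)*δ
      linarith
  | succ t ih =>
      intro j
      obtain ⟨⟨hb0, hb1⟩, hgrid⟩ := ih j
      rw [state_succ_fst]
      dsimp only
      split_ifs with e1 e2 hx
      · exact ⟨⟨by norm_num, le_refl 1⟩, Or.inr ⟨0, by norm_num⟩⟩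
      · exact ⟨⟨le_refl 0, by norm_num⟩, Or.inl rfl⟩
      · -- targeted
        rcases hgrid with h0 | ⟨z, hz⟩
        · exact absurd h0 e2
        have hz1 : 1 ≤ z := by
          rcases Nat.eq_zero_or_pos z with h | h
          · exfalso; rw [h] at hz; norm_num at hz; exact e1 hz
          · exact h
        have hzr : (1:ℝ) ≤ (z:ℝ) := by exact_mod_cast hz1
        rw [hΔi]
        have hle : (GS t).1 j + δ ≤ 1 := by rw [hz]; nlinarith
        rw [min_eq_right hle]
        refine ⟨⟨by linarith [hδ.le], hle⟩, Or.inr ⟨z - 1, ?_⟩⟩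
        have : ((z-1 : ℕ) : ℝ) = (z:ℝ) - 1 := by
          have := Nat.cast_sub hz1 (R := ℝ); simpa using this
        rw [hz, this]; ring
      · -- untargeted
        rw [hΔd]
        rcases le_or_gt 0 ((GS t).1 j - (n:ℝ)*δ) with hge | hlt
        · rw [max_eq_right hge]
          rcases hgrid with h0 | ⟨z, hz⟩
          · exact absurd h0 e2
          refine ⟨⟨hge, by nlinarith⟩, Or.inr ⟨z + n, ?_⟩⟩
          rw [hz]; push_cast; ring
        · rw [max_eq_left hlt.le]
          exact ⟨⟨le_refl 0, by norm_num⟩, Or.inl rfl⟩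

lemma decay (hδ : 0 < δ) (hΔd : ∀ j, Δdec j = (n:ℝ)*δ)
    (hv0 : ∀ j, 0 < v0 j ∧ v0 j < 1) :
    ∀ t j, j ∉ (GS t).2.1 → 0 < v0 j - (t:ℝ)*((n:ℝ)*δ) →
      (GS t).1 j = v0 j - (t:ℝ)*((n:ℝ)*δ) := by
  intro t
  induction t with
  | zero => intro j _ _; simp [onlineState]
  | succ t ih =>
      intro j hA hpos
      have hA' : j ∉ (GS t).2.1 := fun h => hA (GA_mono v0 Δinc Δdec c β t h)
      have hnd : (0:ℝ) ≤ (n:ℝ)*δ := by positivity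
      have hpos' : 0 < v0 j - (t:ℝ)*((n:ℝ)*δ) := by
        push_cast at hpos ⊢
        nlinarith
      have hIH := ih j hA' hpos'
      rw [state_succ_fst]
      dsimp only
      have hlt1 : (GS t).1 j < 1 := by rw [hIH]; nlinarith [(hv0 j).2]
      rw [if_neg (ne_of_lt hlt1), if_neg (ne_of_gt (by rw [hIH]; exact hpos'))]
      have hnx : ¬ ∃ h : Fin 1, (GS (t+1)).2.2.2 h = some j := by
        rintro ⟨h, hh⟩
        have h0 : h = 0 := Subsingleton.elim _ _
        rw [h0] at hh
        exact hA (asg_mem v0 Δinc Δdec c β (t+1) j hh)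
      rw [dif_neg hnx, hΔd]
      rw [max_eq_right (by push_cast at hpos ⊢; nlinarith), hIH]
      push_cast
      ring

lemma run (hδ : 0 < δ) (hΔi : ∀ j h, Δinc j h = δ) :
    ∀ (z t : ℕ) (j : Fin N), (GS t).2.2.2 0 = some j → (GS t).1 j = 1 - (z:ℝ)*δ → 0 < (GS t).1 j →
      (GS (t+z)).1 j = 1 ∧ (GS (t+z)).2.2.2 0 = some j := by
  intro z
  induction z with
  | zero =>
      intro t j hasg hz hpos
      constructor
      · rw [Nat.add_zero, hz]; norm_num
      · rw [Nat.add_zero]; exact hasg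
  | succ z ih =>
      intro t j hasg hz hpos
      have hlt1 : (GS t).1 j < 1 := by
        rw [hz]
        have : (0:ℝ) < ((z:ℝ)+1)*δ := by positivity
        push_cast
        nlinarith
      have hnc : ¬ Cond v0 Δinc Δdec c β t := by
        intro hc
        exact (hc.1 j hasg) ⟨hpos, hlt1⟩
      have hasg' : (GS (t+1)).2.2.2 0 = some j := by
        rw [step_neg v0 Δinc Δdec c β t hnc]
        exact hasg
      have hx : ∃ h : Fin 1, (GS (t+1)).2.2.2 h = some j := ⟨0, hasg'⟩
      have hstep : (GS (t+1)).1 j = 1 - (z:ℝ)*δ := by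
        rw [state_succ_fst]
        dsimp only
        rw [if_neg (ne_of_lt hlt1), if_neg (ne_of_gt hpos), dif_pos hx, hΔi]
        have hle : (GS t).1 j + δ ≤ 1 := by
          rw [hz]; push_cast
          have : (0:ℝ) ≤ (z:ℝ)*δ := by positivity
          nlinarith
        rw [min_eq_right hle, hz]
        push_cast
        ring
      have hpos' : 0 < (GS (t+1)).1 j := by
        rw [hstep]
        rw [hz] at hpos
        push_cast at hpos ⊢
        nlinarith [hδ.le]
      have := ih (t+1) j hasg' hstep hpos'
      have harith : t + 1 + z = t + (z+1) := by omega
      rw [harith] at this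
      exact this

lemma Arep (hδ : 0 < δ) (hΔi : ∀ j h, Δinc j h = δ) (hΔd : ∀ j, Δdec j = (n:ℝ)*δ)
    (hv0 : ∀ j, 0 < v0 j ∧ v0 j < 1) (hm : ∀ j, 1 - v0 j = (m j : ℝ) * δ) :
    ∀ t j, j ∈ (GS t).2.1 → ∃ s, (GS s).1 j = 1 := by
  intro t
  induction t with
  | zero => intro j h; exact absurd h (by simp [onlineState])
  | succ t ih =>
      intro j hj
      by_cases hc : Cond v0 Δinc Δdec c β t
      · rw [step_pos v0 Δinc Δdec c β t hc] at hj
        rcases Finset.mem_insert.1 hj with hj1 | hj2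
        · -- j is the newly picked node
          subst hj1
          set js := pick (GS t).1 (GS t).2.1 hc.2.1 with hjs
          obtain ⟨⟨hnotA, hpos, hlt1⟩, _⟩ := pick_spec (GS t).1 (GS t).2.1 hc.2.1
          obtain ⟨_, hgrid⟩ := grid_all v0 Δinc Δdec c β δ n m hδ hΔi hΔd hv0 hm t js
          rcases hgrid with h0 | ⟨z, hz⟩
          · exact absurd h0 (ne_of_gt hpos)
          have hz1 : 1 ≤ z := by
            rcases Nat.eq_zero_or_pos z with h | h
            · exfalso; rw [h] at hz; norm_num at hz; rw [hz] at hlt1; norm_num at hlt1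
            · exact h
          have hasg' : (GS (t+1)).2.2.2 0 = some js := by
            rw [step_pos v0 Δinc Δdec c β t hc]
            show Function.update ((GS t).2.2.2) 0 (some js) 0 = some js
            simp
          have hx : ∃ h : Fin 1, (GS (t+1)).2.2.2 h = some js := ⟨0, hasg'⟩
          have hstep : (GS (t+1)).1 js = 1 - ((z-1 : ℕ):ℝ)*δ := by
            rw [state_succ_fst]
            dsimp only
            rw [if_neg (ne_of_lt hlt1), if_neg (ne_of_gt hpos), dif_pos hx, hΔi]
            have hzr : (1:ℝ) ≤ (z:ℝ) := by exact_mod_cast hz1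
            have hle : (GS t).1 js + δ ≤ 1 := by rw [hz]; nlinarith
            rw [min_eq_right hle, hz]
            have : ((z-1 : ℕ) : ℝ) = (z:ℝ) - 1 := by
              have := Nat.cast_sub hz1 (R := ℝ); simpa using this
            rw [this]; ring
          have hpos' : 0 < (GS (t+1)).1 js := by
            rw [hstep]
            have hc1 : ((z-1 : ℕ) : ℝ) = (z:ℝ) - 1 := by
              have := Nat.cast_sub hz1 (R := ℝ); simpa using this
            rw [hc1]
            have hzlt : (z:ℝ)*δ < 1 := by rw [hz] at hpos; linarith
            linarith
          obtain ⟨hfin, _⟩ := run v0 Δinc Δdec c β δ hδ hΔi (z-1) (t+1) js hasg' hstep hpos'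
          exact ⟨t+1+(z-1), hfin⟩
        · exact ih j hj2
      · rw [step_neg v0 Δinc Δdec c β t hc] at hj
        exact ih j hj

end Greedy2
end OPT

namespace OPT
section Greedy3
variable {N : ℕ} (v0 : Fin N → ℝ) (Δinc : Fin N → Fin 1 → ℝ) (Δdec : Fin N → ℝ)
  (c : Fin 1 → NNReal) (β : ℝ≥0∞) (δ : ℝ) (n : ℕ) (m : Fin N → ℕ)

local notation "GS" => onlineState v0 Δinc Δdec c β

set_option maxHeartbeats 1000000 in
lemma main_g (hδ : 0 < δ) (hn : 1 ≤ n) (hΔi : ∀ j h, Δinc j h = δ)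
    (hΔd : ∀ j, Δdec j = (n:ℝ)*δ)
    (hv0 : ∀ j, 0 < v0 j ∧ v0 j < 1) (hm : ∀ j, 1 - v0 j = (m j : ℝ) * δ)
    (s : List ℕ) (hfeas : Feas δ n 0 s)
    (hbud : (c 0 : ℝ≥0∞) * (s.length : ℝ≥0∞) ≤ β)
    (hcard : ∀ q, q < s.length → ∃ S : Finset (Fin N),
      q+1 ≤ S.card ∧ ∀ j ∈ S, m j ≤ s.getD q 0) :
    ∃ t, s.length ≤ ((GS t).2.1).card := by
  set k := s.length with hk
  suffices H : ∀ d i t, i + d = k →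
      (∀ j, (GS t).2.2.2 0 = some j → ¬(0 < (GS t).1 j ∧ (GS t).1 j < 1)) →
      i ≤ ((GS t).2.1).card → t ≤ QgF n s 0 i → ∃ t', k ≤ ((GS t').2.1).card by
    apply H k 0 0 (by omega) ?_ (Nat.zero_le _) (by simp [QgF])
    intro j h
    exact absurd h (by simp [onlineState])
  intro d
  induction d using Nat.strong_induction_on with
  | _ d ih =>
    intro i t hik hfree hicard htq
    by_cases hdone : k ≤ ((GS t).2.1).card
    · exact ⟨t, hdone⟩
    push_neg at hdone
    set q := ((GS t).2.1).card with hq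
    have hqk : q < k := hdone
    have hiq : i ≤ q := hicard
    have htq' : t ≤ QgF n s 0 q := le_trans htq (QgF_mono n s 0 hiq)
    have hcon := feas_index hfeas q hqk
    obtain ⟨S, hScard, hSval⟩ := hcard q hqk
    obtain ⟨j0, hj0S, hj0A⟩ : ∃ j0 ∈ S, j0 ∉ (GS t).2.1 := by
      by_contra hcon2
      push_neg at hcon2
      have := Finset.card_le_card hcon2
      omega
    have hj0m : m j0 ≤ s.getD q 0 := hSval j0 hj0S
    have halive : 0 < v0 j0 - (t:ℝ)*((n:ℝ)*δ) := by
      have h1 : (1:ℝ) - v0 j0 = (m j0 : ℝ)*δ := hm j0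
      have h2 : ((m j0 : ℝ)) ≤ (s.getD q 0 : ℝ) := by exact_mod_cast hj0m
      have h3 : ((t:ℝ)) ≤ (QgF n s 0 q : ℝ) := by exact_mod_cast htq'
      nlinarith [hδ.le, (by positivity : (0:ℝ) ≤ (n:ℝ)*δ)]
    have hdec := decay v0 Δinc Δdec c β δ n hδ hΔd hv0 t j0 hj0A halive
    have hlt1 : (GS t).1 j0 < 1 := by
      rw [hdec]
      nlinarith [(hv0 j0).2, (by positivity : (0:ℝ) ≤ (t:ℝ)*((n:ℝ)*δ))]
    have hne : (Finset.univ.filter fun j =>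
        j ∉ (GS t).2.1 ∧ 0 < (GS t).1 j ∧ (GS t).1 j < 1).Nonempty := by
      refine ⟨j0, ?_⟩
      rw [Finset.mem_filter]
      exact ⟨Finset.mem_univ _, hj0A, by rw [hdec]; exact halive, hlt1⟩
    have hbq : (c 0 : ℝ≥0∞) ≤ (GS t).2.2.1 := by
      rw [Gγ_eq]
      apply ENNReal.le_sub_of_add_le_right
      · exact ENNReal.mul_ne_top ENNReal.coe_ne_top (ENNReal.natCast_ne_top _)
      · calc (c 0 : ℝ≥0∞) + (c 0 : ℝ≥0∞) * (q : ℝ≥0∞)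
              = (c 0 : ℝ≥0∞) * ((q+1 : ℕ) : ℝ≥0∞) := by push_cast; ring
          _ ≤ (c 0 : ℝ≥0∞) * (k : ℝ≥0∞) := by
              apply mul_le_mul_right
              exact_mod_cast Nat.succ_le_of_lt hqk
          _ ≤ β := hbud
    have hc : Cond v0 Δinc Δdec c β t := ⟨hfree, hne, hbq⟩
    set js := pick (GS t).1 (GS t).2.1 hc.2.1 with hjs
    obtain ⟨⟨hnotA, hpos, hjlt1⟩, hmax⟩ := pick_spec (GS t).1 (GS t).2.1 hc.2.1
    obtain ⟨_, hgrid⟩ := grid_all v0 Δinc Δdec c β δ n m hδ hΔi hΔd hv0 hm t js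
    rcases hgrid with h0 | ⟨z, hz⟩
    · exact absurd h0 (ne_of_gt hpos)
    have hz1 : 1 ≤ z := by
      rcases Nat.eq_zero_or_pos z with h | h
      · exfalso; rw [h] at hz; norm_num at hz; rw [hz] at hjlt1; norm_num at hjlt1
      · exact h
    have hjmax := hmax j0 hj0A (by rw [hdec]; exact halive) hlt1
    have hzb : z ≤ s.getD q 0 + n * QgF n s 0 q := by
      have e1 : (z:ℝ)*δ = 1 - (GS t).1 js := by rw [hz]; ring
      have h1 : (1:ℝ) - v0 j0 = (m j0 : ℝ)*δ := hm j0
      have h2 : ((m j0 : ℝ)) ≤ (s.getD q 0 : ℝ) := by exact_mod_cast hj0m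
      have h3 : ((t:ℝ)) ≤ (QgF n s 0 q : ℝ) := by exact_mod_cast htq'
      have hzr : (z:ℝ) ≤ ((s.getD q 0 + n * QgF n s 0 q : ℕ) : ℝ) := by
        rw [hdec] at hjmax
        push_cast
        have hbound : (z:ℝ)*δ ≤ ((s.getD q 0 : ℝ) + (n:ℝ)*(QgF n s 0 q : ℝ))*δ := by
          have hnd : (0:ℝ) ≤ (n:ℝ)*δ := by positivity
          nlinarith
        exact le_of_mul_le_mul_right (by nlinarith [hbound]) hδ
      exact_mod_cast hzr
    have hasg' : (GS (t+1)).2.2.2 0 = some js := by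
      rw [step_pos v0 Δinc Δdec c β t hc]
      show Function.update ((GS t).2.2.2) 0 (some js) 0 = some js
      simp
    have hx : ∃ h : Fin 1, (GS (t+1)).2.2.2 h = some js := ⟨0, hasg'⟩
    have hzr1 : (1:ℝ) ≤ (z:ℝ) := by exact_mod_cast hz1
    have hc1 : ((z-1 : ℕ) : ℝ) = (z:ℝ) - 1 := by
      have := Nat.cast_sub hz1 (R := ℝ); simpa using this
    have hstep : (GS (t+1)).1 js = 1 - ((z-1 : ℕ):ℝ)*δ := by
      rw [state_succ_fst]
      dsimp only
      rw [if_neg (ne_of_lt hjlt1), if_neg (ne_of_gt hpos), dif_pos hx, hΔi]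
      have hle : (GS t).1 js + δ ≤ 1 := by rw [hz]; nlinarith
      rw [min_eq_right hle, hz, hc1]
      ring
    have hpos' : 0 < (GS (t+1)).1 js := by
      rw [hstep, hc1]
      have hzlt : (z:ℝ)*δ < 1 := by rw [hz] at hpos; linarith
      linarith
    obtain ⟨hfin, hasg''⟩ := run v0 Δinc Δdec c β δ hδ hΔi (z-1) (t+1) js hasg' hstep hpos'
    have harith : t + 1 + (z-1) = t + z := by omega
    rw [harith] at hfin hasg''
    -- new state facts
    have hfree'' : ∀ jj, (GS (t+z)).2.2.2 0 = some jj →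
        ¬(0 < (GS (t+z)).1 jj ∧ (GS (t+z)).1 jj < 1) := by
      intro jj hjj
      rw [hasg''] at hjj
      have : js = jj := Option.some_inj.1 hjj
      subst this
      rw [hfin]
      rintro ⟨_, hlt⟩
      exact absurd hlt (lt_irrefl 1)
    have hcard'' : q + 1 ≤ ((GS (t+z)).2.1).card := by
      have h1 : (GS (t+1)).2.1 = insert js (GS t).2.1 := by
        rw [step_pos v0 Δinc Δdec c β t hc]
      have h2 : ((GS (t+1)).2.1).card = q + 1 := by
        rw [h1, Finset.card_insert_of_notMem hnotA]
      have h3 : (GS (t+1)).2.1 ⊆ (GS (t+z)).2.1 :=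
        GA_mono_le v0 Δinc Δdec c β (by omega)
      have := Finset.card_le_card h3
      omega
    have hbound'' : t + z ≤ QgF n s 0 (q+1) := by
      have hexp : QgF n s 0 (q+1) = s.getD q 0 + QgF n s 0 q + n * QgF n s 0 q := by
        rw [QgF_succ]; ring
      omega
    exact ih (k - (q+1)) (by omega) (q+1) (t+z) (by omega) hfree'' hcard'' hbound''

end Greedy3
end OPT


set_option maxHeartbeats 1000000

/-- Proposition 1: with a single entity (`M = 1`) and under Assumption 2, the
online policy — the healthiest node not targeted before is allocated to the
entity whenever it is free and the remaining budget covers its cost, the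
entity targeting its allocated node until it is permanently repaired (encoded
by `onlineState`) — achieves the maximum possible reward among all
budget-respecting policies. -/
theorem online_policy_optimal_single_entity {N : ℕ} (hN : 2 ≤ N)
    (v0 : Fin N → ℝ) (Δinc : Fin N → Fin 1 → ℝ) (Δdec : Fin N → ℝ)
    (c : Fin 1 → NNReal) (β : ℝ≥0∞)
    (hv0 : ∀ j, 0 < v0 j ∧ v0 j < 1) (hdec : ∀ j, 0 < Δdec j)
    (hinc : ∀ j h, 0 < Δinc j h) (hA : Assumption2 v0 Δinc Δdec c) :
    ∀ (U : Fin 1 → Finset (Fin N)) (u : ℕ → Fin 1 → Option (Fin N)),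
      ValidPolicy U u → WithinBudget c β U →
        Set.ncard {j | permRepaired v0 Δinc Δdec u j} ≤
          Set.ncard {j | ∃ t, (onlineState v0 Δinc Δdec c β t).1 j = 1} := by
  intro U u hpol hbud
  classical
  obtain ⟨Δi, Δd, c', h1, h2, h3, h4, h5, h6⟩ := hA
  set δ := Δi 0 with hδdef
  have j00 : Fin N := ⟨0, by omega⟩
  have hδ : 0 < δ := by
    have := hinc j00 0
    rwa [h1 j00 0] at this
  have hΔi : ∀ (j : Fin N) (h : Fin 1), Δinc j h = δ := by
    intro j h
    rw [h1 j h]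
    congr 1
    exact Subsingleton.elim _ _
  obtain ⟨n, hn0, hΔdeq⟩ := h5 0
  have hn : 1 ≤ n := hn0
  have hΔd : ∀ j, Δdec j = (n:ℝ) * δ := by
    intro j
    rw [h2 j, hΔdeq]
  have hm' : ∀ j : Fin N, ∃ mm : ℕ, 0 < mm ∧ 1 - v0 j = (mm : ℝ) * δ := fun j => h6 j 0
  choose m hm1 hm2 using hm'
  -- completion times
  set r : Fin N → ℕ := fun j =>
    if h : permRepaired v0 Δinc Δdec u j then Nat.find h else 0 with hrdef
  have hr1 : ∀ j, permRepaired v0 Δinc Δdec u j → health v0 Δinc Δdec u (r j) j = 1 := by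
    intro j hj
    rw [hrdef]
    simp only [dif_pos hj]
    exact Nat.find_spec hj
  have hrmin : ∀ j, permRepaired v0 Δinc Δdec u j →
      ∀ t < r j, health v0 Δinc Δdec u t j ≠ 1 := by
    intro j hj t ht
    rw [hrdef] at ht
    simp only [dif_pos hj] at ht
    exact Nat.find_min hj ht
  have hrpos : ∀ j, permRepaired v0 Δinc Δdec u j → 0 < r j := by
    intro j hj
    rcases Nat.eq_zero_or_pos (r j) with h | h
    · exfalso
      have := hr1 j hj
      rw [h] at this
      have : v0 j = 1 := this
      exact absurd this (ne_of_lt (hv0 j).2)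
    · exact h
  have htl : ∀ j, permRepaired v0 Δinc Δdec u j → ∃ h : Fin 1, u (r j - 1) h = some j :=
    fun j hj => OPT.adv_targeted_last v0 Δinc Δdec u δ n hδ hΔi hΔd hv0 hn j (r j)
      (hrpos j hj) (hr1 j hj) (hrmin j hj)
  have hrinj : ∀ a, permRepaired v0 Δinc Δdec u a → ∀ b, permRepaired v0 Δinc Δdec u b →
      a ≠ b → r a ≠ r b := by
    intro a ha b hb hab hr
    obtain ⟨x, hx⟩ := htl a ha
    obtain ⟨y, hy⟩ := htl b hb
    rw [hr] at hx
    have hxy : x = y := Subsingleton.elim _ _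
    rw [hxy, hy] at hx
    exact hab (Option.some_inj.1 hx).symm
  -- the repaired set and its sorted lists
  set Rep : Finset (Fin N) := Finset.univ.filter (fun j => permRepaired v0 Δinc Δdec u j)
    with hRep
  have hmemRep : ∀ j, j ∈ Rep ↔ permRepaired v0 Δinc Δdec u j := by
    intro j
    rw [hRep, Finset.mem_filter]
    exact ⟨fun h => h.2, fun h => ⟨Finset.mem_univ _, h⟩⟩
  set L0 := Rep.toList with hL0
  haveI : IsTotal (Fin N) (fun a b => r a ≤ r b) := ⟨fun a b => le_total _ _⟩
  haveI : IsTrans (Fin N) (fun a b => r a ≤ r b) := ⟨fun a b cc hab hbc => le_trans hab hbc⟩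
  set L := List.insertionSort (fun a b => r a ≤ r b) L0 with hL
  have hLperm : L.Perm L0 := List.perm_insertionSort _ _
  have hLnodup : L.Nodup := (List.Perm.nodup_iff hLperm).2 (Finset.nodup_toList Rep)
  have hLmem : ∀ j, j ∈ L ↔ j ∈ Rep := by
    intro j
    rw [List.Perm.mem_iff hLperm, hL0, Finset.mem_toList]
  have hLsorted : L.Pairwise (fun a b => r a ≤ r b) := List.pairwise_insertionSort _ _
  have hLpw : L.Pairwise (fun a b => r a < r b) := by
    have hne : L.Pairwise (fun a b => a ≠ b) := hLnodup
    have := List.Pairwise.and hLsorted hne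
    refine this.imp_of_mem ?_
    intro a b ha hb hab
    exact lt_of_le_of_ne hab.1
      (hrinj a ((hmemRep a).1 ((hLmem a).1 ha)) b ((hmemRep b).1 ((hLmem b).1 hb)) hab.2)
  -- feasibility of the completion-ordered value list
  have hfeasL : OPT.Feas δ n 0 (L.map m) := by
    apply OPT.adv_main v0 Δinc Δdec u δ n m hδ hn hΔi hΔd hv0 hm2 r L 0 0 hLnodup ?_ hLpw ?_
    · intro j hj
      have hjr := (hmemRep j).1 ((hLmem j).1 hj)
      exact ⟨hr1 j hjr, hrmin j hjr, hrpos j hjr⟩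
    · have : ∀ j ∈ L.toFinset, OPT.T u j 0 = 0 := fun j _ => OPT.T_zero u j
      rw [Finset.sum_congr rfl this]
      simp
  set s := List.insertionSort (· ≤ ·) (L.map m) with hs
  have hsperm : s.Perm (L.map m) := List.perm_insertionSort _ _
  have hfeas : OPT.Feas δ n 0 s := OPT.feas_insertionSort hδ.le hn hfeasL
  have hssorted : s.Pairwise (· ≤ ·) := List.pairwise_insertionSort _ _
  have hslen : s.length = Rep.card := by
    rw [List.Perm.length_eq hsperm, List.length_map, List.Perm.length_eq hLperm, hL0,
      Finset.length_toList]
  -- budget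
  have hRepU : Rep ⊆ U 0 := by
    intro j hj
    have hjr := (hmemRep j).1 hj
    obtain ⟨h, hu⟩ := htl j hjr
    have := hpol.2 (r j - 1) h j hu
    have h0 : h = 0 := Subsingleton.elim _ _
    rwa [h0] at this
  have hbud0 : (c 0 : ℝ≥0∞) * ((U 0).card : ℝ≥0∞) ≤ β := by
    have := hbud
    rw [WithinBudget, Fin.sum_univ_one] at this
    exact this
  have hbud' : (c 0 : ℝ≥0∞) * (s.length : ℝ≥0∞) ≤ β := by
    refine le_trans ?_ hbud0
    apply mul_le_mul_right
    rw [hslen]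
    exact_mod_cast Finset.card_le_card hRepU
  -- pigeonhole data
  have hcard : ∀ q, q < s.length → ∃ S : Finset (Fin N),
      q+1 ≤ S.card ∧ ∀ j ∈ S, m j ≤ s.getD q 0 := by
    intro q hq
    set v := s.getD q 0 with hv
    refine ⟨(L0.filter (fun j => decide (m j ≤ v))).toFinset, ?_, ?_⟩
    · have hcount := OPT.sorted_countP s hssorted q hq
      rw [← hv] at hcount
      have e1 : s.countP (fun x => decide (x ≤ v)) = (L.map m).countP (fun x => decide (x ≤ v)) :=
        List.Perm.countP_eq _ hsperm
      have e2 : (L.map m).countP (fun x => decide (x ≤ v))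
          = L.countP (fun j => decide (m j ≤ v)) := by
        rw [List.countP_map]
        rfl
      have e3 : L.countP (fun j => decide (m j ≤ v)) = L0.countP (fun j => decide (m j ≤ v)) :=
        List.Perm.countP_eq _ hLperm
      have e4 : (L0.filter (fun j => decide (m j ≤ v))).toFinset.card
          = (L0.filter (fun j => decide (m j ≤ v))).length := by
        apply List.toFinset_card_of_nodup
        exact List.Nodup.filter _ (Finset.nodup_toList Rep)
      rw [e4, ← List.countP_eq_length_filter]
      omega
    · intro j hj
      rw [List.mem_toFinset] at hj
      have := List.of_mem_filter hj
      exact of_decide_eq_true this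
  -- run the greedy analysis
  obtain ⟨t', ht'⟩ := OPT.main_g v0 Δinc Δdec c β δ n m hδ hn hΔi hΔd hv0 hm2 s hfeas hbud' hcard
  -- conclusion
  have hLHS : {j | permRepaired v0 Δinc Δdec u j} = (Rep : Set (Fin N)) := by
    ext j
    simp only [Set.mem_setOf_eq, Finset.mem_coe, hmemRep]
  have hsub : ((onlineState v0 Δinc Δdec c β t').2.1 : Set (Fin N)) ⊆
      {j | ∃ t, (onlineState v0 Δinc Δdec c β t).1 j = 1} := by
    intro j hj
    rw [Finset.mem_coe] at hj
    exact OPT.Arep v0 Δinc Δdec c β δ n m hδ hΔi hΔd hv0 hm2 t' j hj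
  calc Set.ncard {j | permRepaired v0 Δinc Δdec u j} = Rep.card := by
        rw [hLHS, Set.ncard_coe_finset]
    _ = s.length := hslen.symm
    _ ≤ ((onlineState v0 Δinc Δdec c β t').2.1).card := ht'
    _ = Set.ncard ((onlineState v0 Δinc Δdec c β t').2.1 : Set (Fin N)) :=
        (Set.ncard_coe_finset _).symm
    _ ≤ Set.ncard {j | ∃ t, (onlineState v0 Δinc Δdec c β t).1 j = 1} :=
        Set.ncard_le_ncard hsub (Set.toFinite _)
end
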